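/- arXiv:1207.6409 — 5 statements merged into one kernel-verified Lean document; each statement's English description precedes it below -/
import Mathlib

section
/- Let y be a placement covering [0,L] and let S' be a critical set for y. Then for every i ∈ S', the exclusive coverage of i is order-convex: whenever p and q belong to the exclusive coverage of i and p ≤ z ≤ q, the point z also belongs to the exclusive coverage of i. -/
/-- The exclusive coverage of sensor `i` with respect to the subset `S'` in placement `y`:
the points of the barrier `[0, L]` covered by sensor `i` and by no other sensor of `S'`. -/
def Exclusive (L : ℝ) (r y : ℕ → ℝ) (S' : Set ℕ) (i : ℕ) : Set ℝ :=
  {p | p ∈ Set.Icc (0 : ℝ) L ∧ p ∈ Set.Icc (y i - r i) (y i + r i) ∧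
    ∀ u ∈ S', u ≠ i → p ∉ Set.Icc (y u - r u) (y u + r u)}

/-- If `y` covers `[0, L]` and `S'` is a critical set for `y` (a solution set all of whose
sensors are critical, i.e. have nonempty exclusive coverage), then the exclusive coverage
of each `i ∈ S'` is order-convex: if `p, q` lie in it and `p ≤ z ≤ q`, then so does `z`. -/
theorem stmt1 (n : ℕ) (hn : 1 ≤ n) (L : ℝ) (hL : 0 < L)
    (x r y : ℕ → ℝ) (hr : ∀ i, 1 ≤ i → i ≤ n → 0 < r i)
    (S' : Set ℕ) (hS'sub : S' ⊆ Set.Icc 1 n)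
    (hsol : Set.Icc (0 : ℝ) L ⊆ ⋃ i ∈ S', Set.Icc (y i - r i) (y i + r i))
    (hcrit : ∀ i ∈ S', (Exclusive L r y S' i).Nonempty)
    (i : ℕ) (hi : i ∈ S')
    (p q z : ℝ) (hp : p ∈ Exclusive L r y S' i) (hq : q ∈ Exclusive L r y S' i)
    (hpz : p ≤ z) (hzq : z ≤ q) :
    z ∈ Exclusive L r y S' i := by
  obtain ⟨⟨hp0, hpL⟩, ⟨hpi1, hpi2⟩, hpex⟩ := hp
  obtain ⟨⟨hq0, hqL⟩, ⟨hqi1, hqi2⟩, hqex⟩ := hq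
  refine ⟨⟨le_trans hp0 hpz, le_trans hzq hqL⟩,
    ⟨le_trans hpi1 hpz, le_trans hzq hqi2⟩, ?_⟩
  intro u hu hui ⟨hz1, hz2⟩
  -- p avoids u's interval; since p ≤ z ≤ y u + r u, we must have p < y u - r u
  have hpu : p < y u - r u := by
    by_contra h
    exact hpex u hu hui ⟨le_of_not_gt h, le_trans hpz hz2⟩
  have hqu : y u + r u < q := by
    by_contra h
    exact hqex u hu hui ⟨le_trans hz1 hzq, le_of_not_gt h⟩
  -- u's exclusive coverage point w lies in u's interval, hence in (p,q) ⊆ i's interval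
  obtain ⟨w, ⟨_, _⟩, ⟨hw1, hw2⟩, hwex⟩ := hcrit u hu
  exact hwex i hi (Ne.symm hui)
    ⟨le_trans hpi1 (le_trans hpu.le hw1), le_trans hw2 (le_trans hqu.le hqi2)⟩
end

section
/- In the uniform case there always exists an order-preserving optimal solution: there is a covering placement y that is order preserving (y_1 ≤ y_2 ≤ … ≤ y_n) and whose maximum movement max_i |x_i − y_i| equals λ* (in particular the infimum λ* is attained). -/
/-!
A minimiser of the maximum movement exists by compactness: the covering condition is closed, the
maximum movement is continuous, and positions of indices outside `1, …, n` may be pinned to `x`,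
so the covering placements moving no sensor further than a given feasible one form a compact set.
Sorting the positions of a minimiser keeps the same family of intervals, hence still covers, and
since `x` is sorted it moves no sensor further than before (a pigeonhole argument on the sorting
permutation), so the sorted minimiser is still optimal.
-/

/-- Uniform case: placement `y` of sensors `1, …, n`, all with range `r`, covers `[0, L]`. -/
def Covers (n : ℕ) (L r : ℝ) (y : ℕ → ℝ) : Prop :=
  Set.Icc (0 : ℝ) L ⊆ ⋃ i ∈ Set.Icc 1 n, Set.Icc (y i - r) (y i + r)

/-- The maximum movement `max_{1 ≤ i ≤ n} |x i - y i|` of the placement `y`. -/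
noncomputable def MaxMove (n : ℕ) (x y : ℕ → ℝ) : ℝ :=
  sSup ((fun i => |x i - y i|) '' Set.Icc 1 n)

/-- `λ*`: the infimum of the maximum movement over all covering placements. -/
noncomputable def LamStar (n : ℕ) (L r : ℝ) (x : ℕ → ℝ) : ℝ :=
  sInf (MaxMove n x '' {y : ℕ → ℝ | Covers n L r y})

open Set

theorem Equiv.Perm.exists_le_le_apply {ι : Type*} [LinearOrder ι] [LocallyFiniteOrderBot ι]
    (σ : Equiv.Perm ι) (k : ι) : ∃ j ≤ k, k ≤ σ j := by
  by_contra! h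
  have hsub : (Finset.Iic k).map σ.toEmbedding ⊆ Finset.Iio k := by
    intro i hi
    obtain ⟨j, hj, rfl⟩ := Finset.mem_map.1 hi
    exact Finset.mem_Iio.2 (h j (Finset.mem_Iic.1 hj))
  have hlt : (Finset.Iio k).card < (Finset.Iic k).card :=
    Finset.card_lt_card
      ⟨Finset.Iio_subset_Iic_self, fun h => by simpa using h (Finset.mem_Iic.2 le_rfl)⟩
  exact hlt.not_ge (Finset.card_map _ ▸ Finset.card_le_card hsub)

theorem Equiv.Perm.exists_ge_apply_le {ι : Type*} [LinearOrder ι] [LocallyFiniteOrderBot ι]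
    (σ : Equiv.Perm ι) (k : ι) : ∃ j, k ≤ j ∧ σ j ≤ k := by
  obtain ⟨j, hjk, hkj⟩ := σ⁻¹.exists_le_le_apply k
  exact ⟨σ⁻¹ j, hkj, by simpa using hjk⟩

theorem abs_sub_apply_perm_le_of_monotone {ι α : Type*} [LinearOrder ι] [LocallyFiniteOrderBot ι]
    [AddCommGroup α] [LinearOrder α] [IsOrderedAddMonoid α] {a b : ι → α} {σ : Equiv.Perm ι}
    {M : α} (ha : Monotone a) (hb : Monotone (b ∘ σ)) (hM : ∀ i, |a i - b i| ≤ M) (k : ι) :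
    |a k - b (σ k)| ≤ M := by
  rw [abs_sub_le_iff]
  constructor
  · obtain ⟨j, hjk, hkj⟩ := σ.exists_le_le_apply k
    have hb' : b (σ j) ≤ b (σ k) := hb hjk
    exact (sub_le_sub (ha hkj) hb').trans (abs_sub_le_iff.1 (hM (σ j))).1
  · obtain ⟨j, hkj, hjk⟩ := σ.exists_ge_apply_le k
    have hb' : b (σ k) ≤ b (σ j) := hb hkj
    exact (sub_le_sub hb' (ha hjk)).trans (abs_sub_le_iff.1 (hM (σ j))).2

theorem forall_mem_Icc_one_iff_forall_fin {n : ℕ} {P : ℕ → Prop} :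
    (∀ i ∈ Icc 1 n, P i) ↔ ∀ k : Fin n, P (k + 1) := by
  refine ⟨fun h k => h _ ⟨by omega, k.isLt⟩, fun h i hi => ?_⟩
  simpa [Nat.sub_add_cancel hi.1] using h ⟨i - 1, by grind⟩

theorem monotone_fin_succ_iff {n : ℕ} {α : Type*} [Preorder α] {g : ℕ → α} :
    Monotone (fun k : Fin n => g (k + 1)) ↔ ∀ i j, 1 ≤ i → i ≤ j → j ≤ n → g i ≤ g j := by
  refine ⟨fun h i j hi hij hj => ?_, fun h k l hkl => h _ _ (by omega) (by simpa) (by omega)⟩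
  simpa [Nat.sub_add_cancel hi, Nat.sub_add_cancel (hi.trans hij)] using
    h (show (⟨i - 1, by omega⟩ : Fin n) ≤ ⟨j - 1, by omega⟩ by simp; omega)

/-- Its values at indices outside `1, …, n` are junk. -/
def placementOfFin {n : ℕ} (g : Fin n → ℝ) (i : ℕ) : ℝ :=
  if h : i - 1 < n then g ⟨i - 1, h⟩ else 0

@[simp]
theorem placementOfFin_succ {n : ℕ} (g : Fin n → ℝ) (k : Fin n) :
    placementOfFin g (k + 1) = g k := by
  simp [placementOfFin]

section Placement

variable {n : ℕ} {L r : ℝ} {x y z : ℕ → ℝ}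

theorem covers_congr (h : EqOn y z (Icc 1 n)) : Covers n L r y ↔ Covers n L r z := by
  unfold Covers
  rw [iUnion₂_congr fun i hi => by rw [h hi]]

theorem maxMove_congr (h : EqOn y z (Icc 1 n)) : MaxMove n x y = MaxMove n x z := by
  unfold MaxMove
  rw [image_congr fun i hi => by rw [h hi]]

theorem covers_iff_fin :
    Covers n L r y ↔ Icc 0 L ⊆ ⋃ k : Fin n, Icc (y (k + 1) - r) (y (k + 1) + r) := by
  simp only [Covers, subset_def, mem_iUnion, exists_prop]
  refine forall₂_congr fun p _ => ⟨fun ⟨i, hi, hp⟩ => ?_, fun ⟨k, hp⟩ => ⟨k + 1, ?_, hp⟩⟩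
  · exact ⟨⟨i - 1, by grind⟩, by simpa [Nat.sub_add_cancel hi.1] using hp⟩
  · exact ⟨by omega, k.isLt⟩

theorem isClosed_setOf_covers : IsClosed {y : ℕ → ℝ | Covers n L r y} := by
  have : {y : ℕ → ℝ | Covers n L r y} =
      ⋂ p ∈ Icc 0 L, ⋃ i ∈ Icc 1 n, {y : ℕ → ℝ | y i - r ≤ p} ∩ {y | p ≤ y i + r} := by
    ext y
    simp [Covers, subset_def]
  rw [this]
  refine isClosed_biInter fun p _ => (finite_Icc 1 n).isClosed_biUnion fun i _ => ?_
  exact (isClosed_le (by fun_prop) continuous_const).inter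
    (isClosed_le continuous_const (by fun_prop))

theorem covers_two_mul_sub_one (hn : 1 ≤ n) (hr : 0 < r) (hcap : L ≤ 2 * n * r) :
    Covers n L r fun i => (2 * i - 1) * r := by
  intro p ⟨hp₀, hpL⟩
  have h2r : 0 < 2 * r := by positivity
  set i := max 1 ⌈p / (2 * r)⌉₊
  have hi : i ≤ n := max_le hn <| Nat.ceil_le.2 <| (div_le_iff₀ h2r).2 (by linarith)
  have hupper : p / (2 * r) ≤ i :=
    (Nat.le_ceil _).trans (by exact_mod_cast le_max_right 1 ⌈p / (2 * r)⌉₊)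
  have hlower : (i : ℝ) - 1 ≤ p / (2 * r) := by
    rcases max_choice 1 ⌈p / (2 * r)⌉₊ with h | h <;> simp only [i, h]
    · simp only [Nat.cast_one, sub_self]; positivity
    · linarith [Nat.ceil_lt_add_one (div_nonneg hp₀ h2r.le)]
  rw [div_le_iff₀ h2r] at hupper
  rw [le_div_iff₀ h2r] at hlower
  refine mem_iUnion₂.2 ⟨i, ⟨le_max_left _ _, hi⟩, ?_, ?_⟩ <;> linarith

variable (x) in
theorem maxMove_eq_sup' (hn : 1 ≤ n) (y : ℕ → ℝ) :
    MaxMove n x y = (Finset.Icc 1 n).sup' (Finset.nonempty_Icc.2 hn) fun i => |x i - y i| := by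
  rw [MaxMove, Finset.sup'_eq_csSup_image, Finset.coe_Icc]

theorem maxMove_le_iff (hn : 1 ≤ n) {M : ℝ} :
    MaxMove n x y ≤ M ↔ ∀ i ∈ Icc 1 n, |x i - y i| ≤ M := by
  simp [maxMove_eq_sup' x hn]

theorem abs_sub_le_maxMove (hn : 1 ≤ n) {i : ℕ} (hi : i ∈ Icc 1 n) :
    |x i - y i| ≤ MaxMove n x y :=
  (maxMove_le_iff hn).1 le_rfl i hi

theorem continuous_maxMove (hn : 1 ≤ n) : Continuous (MaxMove n x) := by
  rw [funext (maxMove_eq_sup' x hn)]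
  exact Continuous.finset_sup'_apply _ fun i _ => by fun_prop

theorem exists_isMinOn_maxMove (hn : 1 ≤ n) (x : ℕ → ℝ) {y₀ : ℕ → ℝ} (h₀ : Covers n L r y₀) :
    ∃ y, Covers n L r y ∧ IsMinOn (MaxMove n x) {y | Covers n L r y} y := by
  set M₀ := MaxMove n x y₀
  set K := univ.pi fun i => Icc (x i - M₀) (x i + M₀)
  have hpiecewise (y : ℕ → ℝ) : EqOn ((Icc 1 n).piecewise y x) y (Icc 1 n) := piecewise_eqOn ..
  have hmem (y : ℕ → ℝ) (hy : Covers n L r y) (hyM : MaxMove n x y ≤ M₀) :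
      (Icc 1 n).piecewise y x ∈ K ∩ {y | Covers n L r y} := by
    refine ⟨fun i _ => ?_, (covers_congr (hpiecewise y)).2 hy⟩
    by_cases hi : i ∈ Icc 1 n
    · have := abs_sub_le_iff.1 ((maxMove_le_iff hn).1 hyM i hi)
      rw [piecewise_eq_of_mem _ _ _ hi]
      constructor <;> linarith
    · have hM₀ : 0 ≤ M₀ := (abs_nonneg _).trans (abs_sub_le_maxMove hn ⟨le_rfl, hn⟩)
      rw [piecewise_eq_of_notMem _ _ _ hi]
      constructor <;> linarith
  have hK : IsCompact (K ∩ {y | Covers n L r y}) :=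
    (isCompact_univ_pi fun _ => isCompact_Icc).inter_right isClosed_setOf_covers
  obtain ⟨y, ⟨-, hy⟩, hmin⟩ :=
    hK.exists_isMinOn ⟨_, hmem y₀ h₀ le_rfl⟩ (continuous_maxMove hn).continuousOn
  refine ⟨y, hy, fun z hz => ?_⟩
  rcases le_or_gt (MaxMove n x z) M₀ with hzM | hzM
  · exact (hmin (hmem z hz hzM)).trans_eq (maxMove_congr (hpiecewise z))
  · exact ((hmin (hmem y₀ h₀ le_rfl)).trans_eq (maxMove_congr (hpiecewise y₀))).trans hzM.le

theorem exists_sorted_covers_maxMove_le (hn : 1 ≤ n)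
    (hsort : ∀ i j, 1 ≤ i → i ≤ j → j ≤ n → x i ≤ x j) (hy : Covers n L r y) :
    ∃ z, Covers n L r z ∧ (∀ i j, 1 ≤ i → i ≤ j → j ≤ n → z i ≤ z j) ∧
      MaxMove n x z ≤ MaxMove n x y := by
  set f : Fin n → ℝ := fun k => y (k + 1)
  set σ := Tuple.sort f
  refine ⟨placementOfFin (f ∘ σ), ?_, ?_, ?_⟩
  · rw [covers_iff_fin] at hy ⊢
    simpa only [placementOfFin_succ, Function.comp_apply,
      σ.surjective.iUnion_comp fun k => Icc (f k - r) (f k + r)] using hy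
  · exact monotone_fin_succ_iff.1 fun k l hkl => by simpa using Tuple.monotone_sort f hkl
  · rw [maxMove_le_iff hn, forall_mem_Icc_one_iff_forall_fin]
    intro k
    simpa using abs_sub_apply_perm_le_of_monotone (monotone_fin_succ_iff.2 hsort)
      (Tuple.monotone_sort f)
      (fun k => abs_sub_le_maxMove hn ⟨by omega, k.isLt⟩) k

end Placement

theorem stmt5_general (n : ℕ) (hn : 1 ≤ n) (L r : ℝ) (hr : 0 < r)
    (x : ℕ → ℝ) (hsort : ∀ i j, 1 ≤ i → i ≤ j → j ≤ n → x i ≤ x j)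
    (hcap : L ≤ 2 * n * r) :
    ∃ y : ℕ → ℝ, Covers n L r y ∧
      (∀ i j, 1 ≤ i → i ≤ j → j ≤ n → y i ≤ y j) ∧
      MaxMove n x y = LamStar n L r x := by
  obtain ⟨y, hy, hymin⟩ := exists_isMinOn_maxMove hn x (covers_two_mul_sub_one hn hr hcap)
  obtain ⟨z, hz, hzsorted, hzy⟩ := exists_sorted_covers_maxMove_le hn hsort hy
  have hzleast : IsLeast (MaxMove n x '' {y | Covers n L r y}) (MaxMove n x z) :=
    ⟨mem_image_of_mem _ hz, forall_mem_image.2 fun w hw => hzy.trans (hymin hw)⟩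
  exact ⟨z, hz, hzsorted, hzleast.csInf_eq.symm⟩

/-- Uniform case: there always exists an order-preserving optimal solution, i.e. a covering
placement `y` with `y 1 ≤ y 2 ≤ ⋯ ≤ y n` whose maximum movement equals `λ*`
(in particular the infimum `λ*` is attained). -/
theorem stmt5 (n : ℕ) (hn : 1 ≤ n) (L r : ℝ) (hL : 0 < L) (hr : 0 < r)
    (x : ℕ → ℝ) (hsort : ∀ i j, 1 ≤ i → i ≤ j → j ≤ n → x i ≤ x j)
    (hcap : L ≤ 2 * n * r) :
    ∃ y : ℕ → ℝ, Covers n L r y ∧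
      (∀ i j, 1 ≤ i → i ≤ j → j ≤ n → y i ≤ y j) ∧
      MaxMove n x y = LamStar n L r x :=
  stmt5_general n hn L r hr x hsort hcap
end

section
/- In the uniform case, if λ* > 0, then λ* belongs to the finite candidate set Λ = {x_j − (2r(j−i) + r) : 1 ≤ i ≤ j ≤ n} ∪ {L − 2r(j−i) − r − x_i : 1 ≤ i ≤ j ≤ n} ∪ {(x_j − x_i − 2r(j−i))/2 : 1 ≤ i < j ≤ n}. -/
/-! Sorting a covering placement keeps every sensor within the same distance of its initial
position (pigeonhole), so some optimal cover is order preserving. A sorted cover contains a block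
of consecutive sensors `i, …, j` forming a gap-free chain from `0` to `L`; conversely, sensors
`i, …, j` can be moved by at most `c` into such a chain iff `c` dominates `0` and the values of `Λ`
attached to `(i, j)`, as the greedy placement (each sensor as far right as allowed) shows.
Hence `λ*` is the least over all blocks of the largest such value, which lies in `Λ ∪ {0}`. -/

theorem Monotone.le_apply_perm {ι α : Type*} [Fintype ι] [LinearOrder ι] [LinearOrder α]
    {x y : ι → α} (hx : Monotone x) (σ : Equiv.Perm ι) (hyσ : Monotone (y ∘ σ))
    (hxy : ∀ m, x m ≤ y m) (k : ι) : x k ≤ y (σ k) := by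
  classical
  by_contra! hk
  -- Pigeonhole: the `σ`-images of the indices `≤ k` all have `y`-value `< x k`,
  -- but only the indices `< k` can have such a value.
  have hbelow : Finset.univ.filter (fun m => y m < x k) ⊆ Finset.univ.filter (· < k) := by
    intro m
    simp only [Finset.mem_filter, Finset.mem_univ, true_and]
    intro hm
    by_contra! hkm
    exact (hx hkm |>.trans (hxy m)).not_gt hm
  have himage : (Finset.univ.filter (· ≤ k)).map σ.toEmbedding ⊆
      Finset.univ.filter (fun m => y m < x k) := by
    intro m
    simp only [Finset.mem_filter, Finset.mem_univ, true_and, Finset.mem_map,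
      Equiv.toEmbedding_apply]
    rintro ⟨a, ha, rfl⟩
    exact (hyσ ha).trans_lt hk
  have hlt : (Finset.univ.filter (· < k)).card < (Finset.univ.filter (· ≤ k)).card :=
    Finset.card_lt_card <| (Finset.ssubset_iff_of_subset
      (Finset.monotone_filter_right _ fun _ _ => le_of_lt)).2 ⟨k, by simp, by simp⟩
  have := Finset.card_le_card himage
  have := Finset.card_le_card hbelow
  rw [Finset.card_map] at *
  omega

theorem Monotone.abs_sub_apply_perm_le {ι : Type*} [Fintype ι] [LinearOrder ι] {x y : ι → ℝ}
    {c : ℝ} (hx : Monotone x) (σ : Equiv.Perm ι) (hyσ : Monotone (y ∘ σ))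
    (hxy : ∀ m, |x m - y m| ≤ c) (k : ι) : |x k - y (σ k)| ≤ c := by
  have hlow := (hx.add_const (-c)).le_apply_perm σ hyσ
    (fun m => by linarith [(abs_sub_le_iff.1 (hxy m)).1]) k
  -- The upper bound is the lower bound for the order duals of `ι` and `ℝ`.
  have hup := (hx.add_const c).dual.le_apply_perm (ι := ιᵒᵈ) (α := ℝᵒᵈ) σ hyσ.dual
    (fun m => by show y m ≤ x m + c; linarith [(abs_sub_le_iff.1 (hxy m)).2]) k
  change y (σ k) ≤ x k + c at hup
  rw [abs_sub_le_iff]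
  constructor <;> linarith

theorem exists_csInf_eq_of_forall_exists_le {α β : Type*} [ConditionallyCompleteLinearOrder α]
    {S : Set α} {B : Finset β} (hB : B.Nonempty) (f : β → α)
    (hlow : ∀ s ∈ S, ∃ b ∈ B, f b ≤ s) (hup : ∀ b ∈ B, ∃ s ∈ S, s ≤ f b) :
    ∃ b ∈ B, sInf S = f b := by
  obtain ⟨b, hb, hmin⟩ := B.exists_min_image f hB
  have hlower : f b ∈ lowerBounds S := fun s hs =>
    let ⟨b', hb', hle⟩ := hlow s hs
    (hmin b' hb').trans hle
  obtain ⟨s, hs, hsb⟩ := hup b hb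
  rw [le_antisymm hsb (hlower hs)] at hs
  exact ⟨b, hb, IsLeast.csInf_eq ⟨hs, hlower⟩⟩

lemma abs_sub_le_maxMove_s7 {n : ℕ} {x y : ℕ → ℝ} {k : ℕ} (hk : k ∈ Set.Icc 1 n) :
    |x k - y k| ≤ MaxMove n x y :=
  le_csSup ((Set.finite_Icc 1 n).image _).bddAbove ⟨k, hk, rfl⟩

lemma maxMove_le {n : ℕ} {x y : ℕ → ℝ} {c : ℝ} (hn : 1 ≤ n)
    (h : ∀ k ∈ Set.Icc 1 n, |x k - y k| ≤ c) : MaxMove n x y ≤ c :=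
  csSup_le ⟨_, 1, ⟨le_rfl, hn⟩, rfl⟩ (by rintro _ ⟨k, hk, rfl⟩; exact h k hk)

lemma Covers.exists_mem {n : ℕ} {L r t : ℝ} {y : ℕ → ℝ} (hy : Covers n L r y)
    (ht : t ∈ Set.Icc 0 L) : ∃ m ∈ Set.Icc 1 n, y m - r ≤ t ∧ t ≤ y m + r := by
  simpa only [Set.mem_iUnion, Set.mem_Icc, exists_prop] using hy ht

lemma Covers.comp {n : ℕ} {L r : ℝ} {y : ℕ → ℝ} {τ : ℕ → ℕ} (hy : Covers n L r y)
    (hτ : Set.SurjOn τ (Set.Icc 1 n) (Set.Icc 1 n)) : Covers n L r (y ∘ τ) := by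
  intro t ht
  obtain ⟨m, hm, hmt⟩ := hy.exists_mem ht
  obtain ⟨k, hk, rfl⟩ := hτ hm
  exact Set.mem_biUnion hk hmt

lemma exists_monotoneOn_covers {n : ℕ} {L r c : ℝ} {x y : ℕ → ℝ}
    (hx : MonotoneOn x (Set.Icc 1 n)) (hy : Covers n L r y)
    (hc : ∀ k ∈ Set.Icc 1 n, |x k - y k| ≤ c) :
    ∃ y' : ℕ → ℝ, Covers n L r y' ∧ MonotoneOn y' (Set.Icc 1 n) ∧
      ∀ k ∈ Set.Icc 1 n, |x k - y' k| ≤ c := by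
  have hfin : ∀ k ∈ Set.Icc 1 n, ∃ a : Fin n, k = a + 1 :=
    fun k hk => ⟨⟨k - 1, by grind⟩, by grind⟩
  have hfin_mem (a : Fin n) : (a : ℕ) + 1 ∈ Set.Icc 1 n := ⟨by omega, a.isLt⟩
  set σ := Tuple.sort fun a : Fin n => y (a + 1)
  set τ : ℕ → ℕ := fun k => if h : k - 1 < n then σ ⟨k - 1, h⟩ + 1 else k
  have hτ (a : Fin n) : τ (a + 1) = σ a + 1 := by simp [τ]
  refine ⟨y ∘ τ, hy.comp ?_, ?_, ?_⟩
  · intro k hk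
    obtain ⟨a, rfl⟩ := hfin k hk
    exact ⟨σ.symm a + 1, hfin_mem _, by simp [hτ]⟩
  · intro p hp q hq hpq
    obtain ⟨a, rfl⟩ := hfin p hp
    obtain ⟨b, rfl⟩ := hfin q hq
    simpa only [Function.comp_apply, hτ] using
      Tuple.monotone_sort (fun a : Fin n => y (a + 1)) (show a ≤ b by omega)
  · intro k hk
    obtain ⟨a, rfl⟩ := hfin k hk
    rw [Function.comp_apply, hτ]
    exact Monotone.abs_sub_apply_perm_le (x := fun a : Fin n => x (a + 1))
      (fun a b hab => hx (hfin_mem a) (hfin_mem b) (by simpa using hab)) σ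
      (Tuple.monotone_sort _) (fun a => hc _ (hfin_mem a)) a

structure IsCoverChain (L r : ℝ) (y : ℕ → ℝ) (i j : ℕ) : Prop where
  left : y i ≤ r
  right : L - r ≤ y j
  step : ∀ k, i ≤ k → k < j → y (k + 1) ≤ y k + 2 * r

namespace IsCoverChain

variable {L r : ℝ} {y : ℕ → ℝ} {i j : ℕ}

lemma le_add (h : IsCoverChain L r y i j) {p q : ℕ} (hip : i ≤ p) (hpq : p ≤ q) (hqj : q ≤ j) :
    y q ≤ y p + 2 * r * ((q : ℝ) - p) := by
  induction q, hpq using Nat.le_induction with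
  | base => simp
  | succ q hpq ih =>
    have := h.step q (hip.trans hpq) hqj
    have := ih (by omega)
    push_cast
    linarith

lemma Icc_subset (h : IsCoverChain L r y i j) {k : ℕ} (hik : i ≤ k) (hkj : k ≤ j) :
    Set.Icc 0 (y k + r) ⊆ ⋃ m ∈ Set.Icc i k, Set.Icc (y m - r) (y m + r) := by
  induction k, hik using Nat.le_induction with
  | base =>
    intro t ht
    exact Set.mem_biUnion ⟨le_rfl, le_rfl⟩ ⟨by linarith [h.left, ht.1], ht.2⟩
  | succ k hik ih =>
    intro t ht
    by_cases htk : t ≤ y k + r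
    · exact Set.biUnion_subset_biUnion_left (Set.Icc_subset_Icc_right k.le_succ)
        (ih (by omega) ⟨ht.1, htk⟩)
    · have := h.step k hik hkj
      exact Set.mem_biUnion ⟨by omega, le_rfl⟩ ⟨by linarith, ht.2⟩

lemma covers {n : ℕ} (h : IsCoverChain L r y i j) (hi : 1 ≤ i) (hij : i ≤ j) (hj : j ≤ n) :
    Covers n L r y := fun _ ht =>
  Set.biUnion_subset_biUnion_left (Set.Icc_subset_Icc hi hj)
    (h.Icc_subset hij le_rfl ⟨ht.1, by linarith [h.right, ht.2]⟩)

end IsCoverChain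

lemma Covers.exists_isCoverChain {n : ℕ} {L r : ℝ} {y : ℕ → ℝ} (hy : Covers n L r y)
    (hL : 0 ≤ L) (hmono : MonotoneOn y (Set.Icc 1 n)) :
    ∃ i j, 1 ≤ i ∧ i ≤ j ∧ j ≤ n ∧ IsCoverChain L r y i j := by
  obtain ⟨a, ha, ha₁, ha₂⟩ := hy.exists_mem ⟨le_rfl, hL⟩
  obtain ⟨b, hb, hb₁, hb₂⟩ := hy.exists_mem ⟨hL, le_rfl⟩
  rcases lt_or_ge b a with hba | hab
  · exact ⟨b, b, hb.1, le_rfl, hb.2,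
      ⟨(hmono hb ha hba.le).trans (by linarith), by linarith, fun _ h1 h2 => by omega⟩⟩
  refine ⟨a, b, ha.1, hab, hb.2, ⟨by linarith, by linarith, fun k hak hkb => ?_⟩⟩
  have hk : k ∈ Set.Icc 1 n := ⟨ha.1.trans hak, by grind⟩
  have hk1 : k + 1 ∈ Set.Icc 1 n := ⟨by omega, by grind⟩
  by_contra! hgap
  -- The midpoint of a gap between consecutive sensors lies in `[0, L]` and is covered by
  -- no sensor, since every sensor lies weakly left of `y k` or weakly right of `y (k + 1)`.
  have hyak := hmono ha hk hak
  have hykb := hmono hk1 hb (by omega)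
  obtain ⟨m, hm, hmt, htm⟩ := hy.exists_mem (t := (y k + y (k + 1)) / 2)
    ⟨by linarith, by linarith⟩
  rcases le_or_gt m k with hmk | hkm
  · linarith [hmono hm hk hmk]
  · linarith [hmono hk1 hm hkm]

/-- Each sensor placed as far right as its cap `u d` allows without leaving a gap after the
previous one. -/
def greedyChain (r : ℝ) (u : ℕ → ℝ) : ℕ → ℝ
  | 0 => min r (u 0)
  | d + 1 => min (greedyChain r u d + 2 * r) (u (d + 1))

lemma greedyChain_le (r : ℝ) (u : ℕ → ℝ) (d : ℕ) : greedyChain r u d ≤ u d := by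
  cases d <;> exact min_le_right _ _

lemma le_greedyChain {r a : ℝ} {u : ℕ → ℝ} {d : ℕ} (h0 : a ≤ r + 2 * r * d)
    (hu : ∀ e ≤ d, a ≤ u e + 2 * r * ((d : ℝ) - e)) : a ≤ greedyChain r u d := by
  induction d generalizing a with
  | zero => exact le_min (by simpa using h0) (by simpa using hu 0 le_rfl)
  | succ d ih =>
    refine le_min ?_ (by simpa using hu (d + 1) le_rfl)
    have := ih (a := a - 2 * r) (by push_cast at h0; linarith) fun e he => by
      have := hu e (by omega)
      push_cast at this
      linarith
    linarith

/-- A movement `c ≥ 0` bounds these values iff sensors `i, …, j` can be moved by at most `c`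
into an `IsCoverChain`: sensor `q` must stay reachable from the start `r` of the chain, sensor `p`
must still reach `L - r` at its end, and `q` must stay within `2 r (q - p)` of `p`. -/
noncomputable def blockCandidates (L r : ℝ) (x : ℕ → ℝ) (i j : ℕ) : Finset ℝ :=
  insert 0 <|
    (Finset.Icc i j).image (fun q : ℕ => x q - (2 * r * ((q : ℝ) - (i : ℝ)) + r)) ∪
    (Finset.Icc i j).image (fun p : ℕ => L - 2 * r * ((j : ℝ) - (p : ℝ)) - r - x p) ∪
    ((Finset.Icc i j ×ˢ Finset.Icc i j).filter fun pq => pq.1 < pq.2).image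
      fun pq => (x pq.2 - x pq.1 - 2 * r * ((pq.2 : ℝ) - (pq.1 : ℝ))) / 2

noncomputable def blockCost (L r : ℝ) (x : ℕ → ℝ) (i j : ℕ) : ℝ :=
  (blockCandidates L r x i j).max' (Finset.insert_nonempty _ _)

section blockCost

variable {L r c : ℝ} {x : ℕ → ℝ} {i j : ℕ}

lemma blockCost_le_iff : blockCost L r x i j ≤ c ↔ 0 ≤ c ∧
    (∀ q, i ≤ q → q ≤ j → x q - (2 * r * ((q : ℝ) - (i : ℝ)) + r) ≤ c) ∧
    (∀ p, i ≤ p → p ≤ j → L - 2 * r * ((j : ℝ) - (p : ℝ)) - r - x p ≤ c) ∧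
    (∀ p q, i ≤ p → p < q → q ≤ j → (x q - x p - 2 * r * ((q : ℝ) - (p : ℝ))) / 2 ≤ c) := by
  simp only [blockCost, blockCandidates, Finset.max'_le_iff, Finset.forall_mem_insert,
    Finset.forall_mem_union, Finset.forall_mem_image, Finset.mem_Icc, Finset.mem_filter,
    Finset.mem_product, and_imp, Prod.forall]
  grind

lemma blockCost_cases : blockCost L r x i j = 0 ∨
    (∃ q, i ≤ q ∧ q ≤ j ∧ blockCost L r x i j = x q - (2 * r * ((q : ℝ) - (i : ℝ)) + r)) ∨
    (∃ p, i ≤ p ∧ p ≤ j ∧ blockCost L r x i j = L - 2 * r * ((j : ℝ) - (p : ℝ)) - r - x p) ∨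
    (∃ p q, i ≤ p ∧ p < q ∧ q ≤ j ∧
      blockCost L r x i j = (x q - x p - 2 * r * ((q : ℝ) - (p : ℝ))) / 2) := by
  have h : blockCost L r x i j ∈ blockCandidates L r x i j := Finset.max'_mem _ _
  simp only [blockCandidates, Finset.mem_insert, Finset.mem_union, Finset.mem_image,
    Finset.mem_Icc, Finset.mem_filter, Finset.mem_product, Prod.exists] at h
  rcases h with h | (⟨q, ⟨hiq, hqj⟩, h⟩ | ⟨p, ⟨hip, hpj⟩, h⟩) | ⟨p, q, ⟨⟨⟨hip, -⟩, -, hqj⟩, hpq⟩, h⟩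
  exacts [.inl h, .inr <| .inl ⟨q, hiq, hqj, h.symm⟩, .inr <| .inr <| .inl ⟨p, hip, hpj, h.symm⟩,
    .inr <| .inr <| .inr ⟨p, q, hip, hpq, hqj, h.symm⟩]

end blockCost

lemma Covers.exists_blockCost_le_maxMove {n : ℕ} {L r : ℝ} {x y : ℕ → ℝ}
    (hy : Covers n L r y) (hL : 0 ≤ L) (hx : MonotoneOn x (Set.Icc 1 n)) :
    ∃ i j, 1 ≤ i ∧ i ≤ j ∧ j ≤ n ∧ L ≤ 2 * r * ((j : ℝ) - (i : ℝ) + 1) ∧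
      blockCost L r x i j ≤ MaxMove n x y := by
  obtain ⟨z, hz, hzmono, hxz⟩ := exists_monotoneOn_covers hx hy fun _ hk => abs_sub_le_maxMove_s7 hk
  obtain ⟨i, j, hi, hij, hj, hchain⟩ := hz.exists_isCoverChain hL hzmono
  set c := MaxMove n x y
  have hbounds : ∀ k, i ≤ k → k ≤ j → x k - c ≤ z k ∧ z k ≤ x k + c := fun k hik hkj => by
    have := abs_sub_le_iff.1 (hxz k ⟨hi.trans hik, hkj.trans hj⟩)
    constructor <;> linarith
  refine ⟨i, j, hi, hij, hj,
    by linarith [hchain.left, hchain.right, hchain.le_add le_rfl hij le_rfl],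
    blockCost_le_iff.2 ⟨?_, fun q hiq hqj => ?_, fun p hip hpj => ?_, fun p q hip hpq hqj => ?_⟩⟩
  · linarith [hbounds i le_rfl hij]
  · linarith [hbounds q hiq hqj, hchain.left, hchain.le_add le_rfl hiq hqj]
  · linarith [hbounds p hip hpj, hchain.right, hchain.le_add hip hpj le_rfl]
  · linarith [hbounds p hip (hpq.le.trans hqj), hbounds q (hip.trans hpq.le) hqj,
      hchain.le_add hip hpq.le hqj]

lemma exists_covers_maxMove_le_of_blockCost_le {n : ℕ} {L r c : ℝ} {x : ℕ → ℝ} {i j : ℕ}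
    (hi : 1 ≤ i) (hij : i ≤ j) (hj : j ≤ n) (hcap : L ≤ 2 * r * ((j : ℝ) - (i : ℝ) + 1))
    (hc : blockCost L r x i j ≤ c) : ∃ y, Covers n L r y ∧ MaxMove n x y ≤ c := by
  obtain ⟨hc0, hleft, hright, hpair⟩ := blockCost_le_iff.1 hc
  set g := greedyChain r fun d => x (i + d) + c
  set y : ℕ → ℝ := fun k => if i ≤ k ∧ k ≤ j then g (k - i) else x k
  have hy (d : ℕ) (hd : i + d ≤ j) : y (i + d) = g d := by simp [y, hd]
  have hlow (d : ℕ) (hd : i + d ≤ j) : x (i + d) - c ≤ g d := by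
    refine le_greedyChain (by have := hleft (i + d) (by omega) hd; push_cast at this; linarith)
      fun e he => ?_
    rcases he.lt_or_eq with he | rfl
    · have := hpair (i + e) (i + d) (by omega) (by omega) hd
      push_cast at this
      linarith
    · linarith
  have hchain : IsCoverChain L r y i j := by
    obtain ⟨m, rfl⟩ := Nat.exists_eq_add_of_le hij
    refine ⟨?_, ?_, fun k hik hkj => ?_⟩
    · rw [← add_zero i, hy 0 (by omega)]
      exact min_le_left _ _
    · rw [hy m le_rfl]
      refine le_greedyChain (by push_cast at hcap; linarith) fun e he => ?_
      have := hright (i + e) (by omega) (by omega)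
      push_cast at this
      linarith
    · obtain ⟨d, rfl⟩ := Nat.exists_eq_add_of_le hik
      rw [hy d (by omega), show i + d + 1 = i + (d + 1) by ring, hy (d + 1) (by omega)]
      exact min_le_left _ _
  refine ⟨y, hchain.covers hi hij hj, maxMove_le (hi.trans (hij.trans hj)) fun k _ => ?_⟩
  by_cases hk : i ≤ k ∧ k ≤ j
  · obtain ⟨d, rfl⟩ := Nat.exists_eq_add_of_le hk.1
    rw [hy d hk.2, abs_sub_le_iff]
    constructor
    · linarith [hlow d hk.2]
    · linarith [greedyChain_le r (fun d => x (i + d) + c) d]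
  · simpa [y, hk] using hc0

theorem exists_lamStar_eq_blockCost {n : ℕ} {L r : ℝ} {x : ℕ → ℝ} (hn : 1 ≤ n) (hL : 0 ≤ L)
    (hx : MonotoneOn x (Set.Icc 1 n)) (hcap : L ≤ 2 * n * r) :
    ∃ i j, 1 ≤ i ∧ i ≤ j ∧ j ≤ n ∧ LamStar n L r x = blockCost L r x i j := by
  set blocks := (Finset.Icc 1 n ×ˢ Finset.Icc 1 n).filter
    fun b : ℕ × ℕ => b.1 ≤ b.2 ∧ L ≤ 2 * r * ((b.2 : ℝ) - (b.1 : ℝ) + 1)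
  have hmem {i j : ℕ} : (i, j) ∈ blocks ↔
      1 ≤ i ∧ i ≤ j ∧ j ≤ n ∧ L ≤ 2 * r * ((j : ℝ) - (i : ℝ) + 1) := by
    simp only [blocks, Finset.mem_filter, Finset.mem_product, Finset.mem_Icc]
    grind
  obtain ⟨⟨i, j⟩, hb, hcost⟩ := exists_csInf_eq_of_forall_exists_le
    (S := MaxMove n x '' {y | Covers n L r y}) (f := fun b => blockCost L r x b.1 b.2)
    ⟨(1, n), hmem.2 ⟨le_rfl, hn, le_rfl, by push_cast; linarith⟩⟩
    (by
      rintro _ ⟨y, hy, rfl⟩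
      obtain ⟨i, j, hi, hij, hj, hcapij, hc⟩ := hy.exists_blockCost_le_maxMove hL hx
      exact ⟨(i, j), hmem.2 ⟨hi, hij, hj, hcapij⟩, hc⟩)
    (by
      rintro ⟨i, j⟩ hb
      obtain ⟨hi, hij, hj, hcapij⟩ := hmem.1 hb
      obtain ⟨y, hy, hc⟩ := exists_covers_maxMove_le_of_blockCost_le hi hij hj hcapij le_rfl
      exact ⟨_, ⟨y, hy, rfl⟩, hc⟩)
  obtain ⟨hi, hij, hj, -⟩ := hmem.1 hb
  exact ⟨i, j, hi, hij, hj, hcost⟩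

theorem stmt7_general (n : ℕ) (hn : 1 ≤ n) (L r : ℝ) (hL : 0 < L)
    (x : ℕ → ℝ) (hsort : ∀ i j, 1 ≤ i → i ≤ j → j ≤ n → x i ≤ x j)
    (hcap : L ≤ 2 * n * r)
    (hlam : 0 < LamStar n L r x) :
    (∃ i j, 1 ≤ i ∧ i ≤ j ∧ j ≤ n ∧
        LamStar n L r x = x j - (2 * r * ((j : ℝ) - (i : ℝ)) + r)) ∨
    (∃ i j, 1 ≤ i ∧ i ≤ j ∧ j ≤ n ∧
        LamStar n L r x = L - 2 * r * ((j : ℝ) - (i : ℝ)) - r - x i) ∨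
    (∃ i j, 1 ≤ i ∧ i < j ∧ j ≤ n ∧
        LamStar n L r x = (x j - x i - 2 * r * ((j : ℝ) - (i : ℝ))) / 2) := by
  obtain ⟨i, j, hi, hij, hj, hcost⟩ := exists_lamStar_eq_blockCost hn hL.le
    (fun a ha b hb hab => hsort a b ha.1 hab hb.2) hcap
  rcases blockCost_cases (L := L) (r := r) (x := x) (i := i) (j := j) with
    h | ⟨q, hiq, hqj, h⟩ | ⟨p, hip, hpj, h⟩ | ⟨p, q, hip, hpq, hqj, h⟩ <;> rw [← hcost] at h
  · exact absurd h hlam.ne'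
  · exact .inl ⟨i, q, hi, hiq, hqj.trans hj, h⟩
  · exact .inr <| .inl ⟨p, j, hi.trans hip, hpj, hj, h⟩
  · exact .inr <| .inr ⟨p, q, hi.trans hip, hpq, hqj.trans hj, h⟩

/-- Uniform case: if `λ* > 0`, then `λ*` belongs to the finite candidate set
`Λ = {x j − (2r(j−i) + r)} ∪ {L − 2r(j−i) − r − x i} ∪ {(x j − x i − 2r(j−i))/2}`
(with `1 ≤ i ≤ j ≤ n` in the first two families and `1 ≤ i < j ≤ n` in the third). -/
theorem stmt7 (n : ℕ) (hn : 1 ≤ n) (L r : ℝ) (hL : 0 < L) (hr : 0 < r)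
    (x : ℕ → ℝ) (hsort : ∀ i j, 1 ≤ i → i ≤ j → j ≤ n → x i ≤ x j)
    (hcap : L ≤ 2 * n * r)
    (hlam : 0 < LamStar n L r x) :
    (∃ i j, 1 ≤ i ∧ i ≤ j ∧ j ≤ n ∧
        LamStar n L r x = x j - (2 * r * ((j : ℝ) - (i : ℝ)) + r)) ∨
    (∃ i j, 1 ≤ i ∧ i ≤ j ∧ j ≤ n ∧
        LamStar n L r x = L - 2 * r * ((j : ℝ) - (i : ℝ)) - r - x i) ∨
    (∃ i j, 1 ≤ i ∧ i < j ∧ j ≤ n ∧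
        LamStar n L r x = (x j - x i - 2 * r * ((j : ℝ) - (i : ℝ))) / 2) :=
  stmt7_general n hn L r hL x hsort hcap hlam
end

section
/- In the special uniform case (all sensors initially on the barrier), if λ* > 0, then there exist an order-preserving covering placement y with maximum movement λ* and indices i ≤ j such that sensors i, i+1, …, j are in attached positions in y (y_{t+1} = y_t + 2r for i ≤ t ≤ j−1) and one of the following three cases holds: (a) i = 1, y_1 = r, and y_j = x_j − λ*; (b) j = n, y_n = L − r, and y_i = x_i + λ*; (c) i < j, y_i = x_i + λ*, and y_j = x_j − λ*. -/
namespace S13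

open MeasureTheory

/-- Extended initial positions: a virtual sensor `0` sits at `-r` (after adding `lam`). -/
noncomputable def ee (r lam : ℝ) (x : ℕ → ℝ) (s : ℕ) : ℝ :=
  if s = 0 then -r else x s + lam

/-- The greedy (leftmost maximal-reach) placement with movement budget `lam`. -/
noncomputable def gg (r lam : ℝ) (x : ℕ → ℝ) (t : ℕ) : ℝ :=
  (Finset.Icc 0 t).inf' (by simp) (fun s => ee r lam x s + 2 * ((t : ℝ) - (s : ℝ)) * r)

lemma gg_le (r lam : ℝ) (x : ℕ → ℝ) {t s : ℕ} (hs : s ≤ t) :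
    gg r lam x t ≤ ee r lam x s + 2 * ((t : ℝ) - (s : ℝ)) * r :=
  Finset.inf'_le _ (by simp [hs])

lemma le_gg (r lam : ℝ) (x : ℕ → ℝ) {t : ℕ} {c : ℝ}
    (h : ∀ s, s ≤ t → c ≤ ee r lam x s + 2 * ((t : ℝ) - (s : ℝ)) * r) :
    c ≤ gg r lam x t :=
  Finset.le_inf' _ _ (fun s hs => h s (by simpa using hs))

lemma maxmove_el {n : ℕ} (x y : ℕ → ℝ) {i : ℕ} (h1 : 1 ≤ i) (h2 : i ≤ n) :
    |x i - y i| ≤ MaxMove n x y :=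
  le_csSup (((Set.finite_Icc 1 n).image _).bddAbove) ⟨i, ⟨h1, h2⟩, rfl⟩

lemma maxmove_le {n : ℕ} (hn : 1 ≤ n) (x y : ℕ → ℝ) {c : ℝ}
    (hc : ∀ i, 1 ≤ i → i ≤ n → |x i - y i| ≤ c) : MaxMove n x y ≤ c :=
  csSup_le ⟨_, ⟨1, ⟨le_refl 1, hn⟩, rfl⟩⟩ (by rintro m ⟨i, hi, rfl⟩; exact hc i hi.1 hi.2)

lemma maxmove_nonneg {n : ℕ} (hn : 1 ≤ n) (x y : ℕ → ℝ) : 0 ≤ MaxMove n x y :=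
  le_trans (abs_nonneg _) (maxmove_el x y le_rfl hn)

lemma covers_of_chain {n : ℕ} {L r : ℝ} {y : ℕ → ℝ} (hn : 1 ≤ n)
    (h1 : y 1 ≤ r) (hchain : ∀ t, 1 ≤ t → t < n → y (t + 1) ≤ y t + 2 * r)
    (hlast : L - r ≤ y n) : Covers n L r y := by
  intro p hp
  classical
  set T := (Finset.Icc 1 n).filter (fun t => y t - r ≤ p) with hT
  have h1T : 1 ∈ T := by
    simp only [hT, Finset.mem_filter, Finset.mem_Icc]
    exact ⟨⟨le_rfl, hn⟩, by have := hp.1; linarith⟩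
  have hTne : T.Nonempty := ⟨1, h1T⟩
  set t0 := T.max' hTne with ht0
  have ht0T : t0 ∈ T := T.max'_mem hTne
  have ht0n : t0 ∈ Finset.Icc 1 n := Finset.mem_of_mem_filter _ ht0T
  have hyle : y t0 - r ≤ p := (Finset.mem_filter.mp ht0T).2
  obtain ⟨ht01, ht0le⟩ := Finset.mem_Icc.mp ht0n
  have hub : p ≤ y t0 + r := by
    rcases eq_or_lt_of_le ht0le with he | hlt
    · have := hp.2; rw [he]; linarith
    · by_contra hcon
      push_neg at hcon
      have hmem : t0 + 1 ∈ T := by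
        refine Finset.mem_filter.mpr ⟨Finset.mem_Icc.mpr ⟨by omega, hlt⟩, ?_⟩
        have := hchain t0 ht01 hlt
        linarith
      have := T.le_max' _ hmem
      omega
  exact Set.mem_iUnion₂.mpr ⟨t0, Set.mem_Icc.mpr ⟨ht01, ht0le⟩, ⟨hyle, hub⟩⟩

lemma measure_step {r c d : ℝ} {y : ℕ → ℝ} {F : Finset ℕ}
    (hr : 0 < r)
    (h : Set.Ioo c d ⊆ ⋃ s ∈ F, Set.Icc (y s - r) (y s + r)) :
    d - c ≤ F.card * (2 * r) := by
  have hm : volume (Set.Ioo c d) ≤ volume (⋃ s ∈ F, Set.Icc (y s - r) (y s + r)) :=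
    measure_mono h
  have h2 : volume (⋃ s ∈ F, Set.Icc (y s - r) (y s + r)) ≤
      ∑ s ∈ F, volume (Set.Icc (y s - r) (y s + r)) := measure_biUnion_finset_le F _
  have h3 : ∑ s ∈ F, volume (Set.Icc (y s - r) (y s + r)) = F.card • ENNReal.ofReal (2 * r) := by
    rw [Finset.sum_congr rfl (fun s _ => ?_), Finset.sum_const]
    rw [Real.volume_Icc]
    congr 1
    ring
  rw [Real.volume_Ioo] at hm
  have h4 : ENNReal.ofReal (d - c) ≤ ENNReal.ofReal ((F.card : ℝ) * (2 * r)) := by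
    calc ENNReal.ofReal (d - c) ≤ F.card • ENNReal.ofReal (2 * r) := le_trans hm (h2.trans h3.le)
    _ = ENNReal.ofReal ((F.card : ℝ) * (2 * r)) := by
        rw [nsmul_eq_mul, ← ENNReal.ofReal_natCast, ← ENNReal.ofReal_mul (by positivity)]
  exact (ENNReal.ofReal_le_ofReal_iff (by positivity)).mp h4

variable {n : ℕ} {L r lam : ℝ} {x : ℕ → ℝ}

lemma lb_A (hn : 1 ≤ n) (hr : 0 < r)
    (hsort : ∀ i j, 1 ≤ i → i ≤ j → j ≤ n → x i ≤ x j)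
    (hon : ∀ i, 1 ≤ i → i ≤ n → x i ∈ Set.Icc (0 : ℝ) L)
    {y : ℕ → ℝ} (hy : Covers n L r y) {t : ℕ} (ht1 : 1 ≤ t) (htn : t ≤ n) :
    x t - (2 * (t : ℝ) - 1) * r ≤ MaxMove n x y := by
  set m := MaxMove n x y with hm
  have hm0 : 0 ≤ m := maxmove_nonneg hn x y
  have hsub : Set.Ioo (0 : ℝ) (x t - m - r) ⊆
      ⋃ u ∈ Finset.Icc 1 (t - 1), Set.Icc (y u - r) (y u + r) := by
    intro p hp
    have hpI : p ∈ Set.Icc (0 : ℝ) L := by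
      refine ⟨hp.1.le, ?_⟩
      have := (hon t ht1 htn).2
      have := hp.2
      linarith
    obtain ⟨u, hu, hpu⟩ := Set.mem_iUnion₂.mp (hy hpI)
    refine Set.mem_iUnion₂.mpr ⟨u, Finset.mem_Icc.mpr ⟨hu.1, ?_⟩, hpu⟩
    by_contra hcon
    have hut : t ≤ u := by omega
    have hxx := hsort t u ht1 hut hu.2
    have habs := maxmove_el x y hu.1 hu.2
    have h1 : x u - m ≤ y u := by
      have := abs_le.mp habs
      linarith [this.1]
    have := hpu.1
    have := hp.2
    linarith
  have hms := measure_step hr hsub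
  have hcard : (Finset.Icc 1 (t - 1)).card = t - 1 := by
    rw [Nat.card_Icc]; omega
  rw [hcard] at hms
  have hcast : ((t - 1 : ℕ) : ℝ) = (t : ℝ) - 1 := by
    rw [Nat.cast_sub ht1]; norm_num
  rw [hcast] at hms
  nlinarith [hms]

lemma lb_B (hn : 1 ≤ n) (hr : 0 < r)
    (hsort : ∀ i j, 1 ≤ i → i ≤ j → j ≤ n → x i ≤ x j)
    (hon : ∀ i, 1 ≤ i → i ≤ n → x i ∈ Set.Icc (0 : ℝ) L)
    {y : ℕ → ℝ} (hy : Covers n L r y) {t : ℕ} (ht1 : 1 ≤ t) (htn : t ≤ n) :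
    L - x t - (2 * ((n : ℝ) - t) + 1) * r ≤ MaxMove n x y := by
  set m := MaxMove n x y with hm
  have hm0 : 0 ≤ m := maxmove_nonneg hn x y
  have hsub : Set.Ioo (x t + m + r) L ⊆
      ⋃ u ∈ Finset.Icc (t + 1) n, Set.Icc (y u - r) (y u + r) := by
    intro p hp
    have hpI : p ∈ Set.Icc (0 : ℝ) L := by
      refine ⟨?_, hp.2.le⟩
      have := (hon t ht1 htn).1
      have := hp.1
      linarith
    obtain ⟨u, hu, hpu⟩ := Set.mem_iUnion₂.mp (hy hpI)
    refine Set.mem_iUnion₂.mpr ⟨u, Finset.mem_Icc.mpr ⟨?_, hu.2⟩, hpu⟩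
    by_contra hcon
    have hut : u ≤ t := by omega
    have hxx := hsort u t hu.1 hut htn
    have habs := maxmove_el x y hu.1 hu.2
    have h1 : y u ≤ x u + m := by
      have := abs_le.mp habs
      linarith [this.2]
    have := hpu.2
    have := hp.1
    linarith
  have hms := measure_step hr hsub
  have hcard : (Finset.Icc (t + 1) n).card = n - t := by
    rw [Nat.card_Icc]; omega
  rw [hcard] at hms
  have hcast : ((n - t : ℕ) : ℝ) = (n : ℝ) - t := by
    rw [Nat.cast_sub htn]
  rw [hcast] at hms
  nlinarith [hms]

lemma lb_C (hn : 1 ≤ n) (hr : 0 < r)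
    (hsort : ∀ i j, 1 ≤ i → i ≤ j → j ≤ n → x i ≤ x j)
    (hon : ∀ i, 1 ≤ i → i ≤ n → x i ∈ Set.Icc (0 : ℝ) L)
    {y : ℕ → ℝ} (hy : Covers n L r y) {s t : ℕ} (hs1 : 1 ≤ s) (hst : s < t) (htn : t ≤ n) :
    (x t - x s) / 2 - ((t : ℝ) - s) * r ≤ MaxMove n x y := by
  set m := MaxMove n x y with hm
  have hm0 : 0 ≤ m := maxmove_nonneg hn x y
  have hsub : Set.Ioo (x s + m + r) (x t - m - r) ⊆
      ⋃ u ∈ Finset.Icc (s + 1) (t - 1), Set.Icc (y u - r) (y u + r) := by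
    intro p hp
    have hpI : p ∈ Set.Icc (0 : ℝ) L := by
      constructor
      · have := (hon s hs1 (le_trans hst.le htn)).1
        have := hp.1
        linarith
      · have := (hon t (by omega) htn).2
        have := hp.2
        linarith
    obtain ⟨u, hu, hpu⟩ := Set.mem_iUnion₂.mp (hy hpI)
    refine Set.mem_iUnion₂.mpr ⟨u, Finset.mem_Icc.mpr ⟨?_, ?_⟩, hpu⟩
    · by_contra hcon
      have hus : u ≤ s := by omega
      have hxx := hsort u s hu.1 hus (le_trans hst.le htn)
      have habs := maxmove_el x y hu.1 hu.2
      have h1 : y u ≤ x u + m := by have := abs_le.mp habs; linarith [this.2]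
      have := hpu.2
      have := hp.1
      linarith
    · by_contra hcon
      have hut : t ≤ u := by omega
      have hxx := hsort t u (by omega) hut hu.2
      have habs := maxmove_el x y hu.1 hu.2
      have h1 : x u - m ≤ y u := by have := abs_le.mp habs; linarith [this.1]
      have := hpu.1
      have := hp.2
      linarith
  have hms := measure_step hr hsub
  have hcard : (Finset.Icc (s + 1) (t - 1)).card = t - s - 1 := by
    rw [Nat.card_Icc]; omega
  rw [hcard] at hms
  have hcast : ((t - s - 1 : ℕ) : ℝ) = (t : ℝ) - s - 1 := by
    rw [Nat.cast_sub (by omega), Nat.cast_sub (by omega)]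
    norm_num
  rw [hcast] at hms
  nlinarith [hms]

lemma gg_ub {t : ℕ} (ht1 : 1 ≤ t) : gg r lam x t ≤ x t + lam := by
  have := gg_le r lam x (le_refl t)
  rw [ee, if_neg (by omega)] at this
  simpa using this

lemma gg_lb (H0 : 0 ≤ lam) (HA : ∀ t, 1 ≤ t → t ≤ n → x t - (2 * (t : ℝ) - 1) * r ≤ lam)
    (HC : ∀ s t, 1 ≤ s → s < t → t ≤ n → (x t - x s) / 2 - ((t : ℝ) - s) * r ≤ lam)
    {t : ℕ} (ht1 : 1 ≤ t) (htn : t ≤ n) : x t - lam ≤ gg r lam x t := by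
  apply le_gg
  intro s hs
  by_cases hs0 : s = 0
  · subst hs0
    rw [ee, if_pos rfl]
    have := HA t ht1 htn
    push_cast
    linarith
  · rw [ee, if_neg hs0]
    rcases eq_or_lt_of_le hs with he | hlt
    · subst he; linarith [H0]
    · have := HC s t (by omega) hlt htn
      linarith

lemma gg_first (hr : 0 < r) : gg r lam x 1 ≤ r := by
  have := gg_le r lam x (Nat.zero_le 1)
  rw [ee, if_pos rfl] at this
  push_cast at this
  linarith

lemma gg_last (hn : 1 ≤ n) (hcap : L ≤ 2 * n * r)
    (HB : ∀ t, 1 ≤ t → t ≤ n → L - x t - (2 * ((n : ℝ) - t) + 1) * r ≤ lam) :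
    L - r ≤ gg r lam x n := by
  apply le_gg
  intro s hs
  by_cases hs0 : s = 0
  · subst hs0
    rw [ee, if_pos rfl]
    push_cast
    linarith
  · rw [ee, if_neg hs0]
    have := HB s (by omega) hs
    linarith

lemma gg_chain (t : ℕ) : gg r lam x (t + 1) ≤ gg r lam x t + 2 * r := by
  obtain ⟨s0, hs0m, hs0⟩ := Finset.exists_mem_eq_inf' (by simp : (Finset.Icc 0 t).Nonempty)
    (fun s => ee r lam x s + 2 * ((t : ℝ) - (s : ℝ)) * r)
  have hs0t : s0 ≤ t := by simpa using hs0m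
  have hgt : gg r lam x t = ee r lam x s0 + 2 * ((t : ℝ) - (s0 : ℝ)) * r := hs0
  have h1 := gg_le r lam x (le_trans hs0t (Nat.le_succ t)) (s := s0)
  rw [hgt]
  push_cast at h1 ⊢
  linarith

lemma gg_mono (hsort : ∀ i j, 1 ≤ i → i ≤ j → j ≤ n → x i ≤ x j) (hr : 0 < r)
    {i j : ℕ} (hi : 1 ≤ i) (hij : i ≤ j) (hjn : j ≤ n) : gg r lam x i ≤ gg r lam x j := by
  induction j, hij using Nat.le_induction with
  | base => exact le_rfl
  | succ m hm ih =>
    have hm1 : 1 ≤ m := le_trans hi hm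
    have hstep : gg r lam x m ≤ gg r lam x (m + 1) := by
      apply le_gg
      intro s hs
      rcases Nat.lt_or_ge s (m + 1) with h | h
      · have h2 := gg_le r lam x (show s ≤ m by omega)
        push_cast
        push_cast at h2
        linarith
      · have hs' : s = m + 1 := by omega
        subst hs'
        have h1 : gg r lam x m ≤ x m + lam := gg_ub hm1
        have h2 : x m ≤ x (m + 1) := hsort m (m + 1) hm1 (Nat.le_succ m) hjn
        rw [ee, if_neg (by omega)]
        push_cast
        linarith
    exact le_trans (ih (by omega)) hstep

lemma gg_block {i j : ℕ} {c : ℝ} (hEi : ee r lam x i = c)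
    (hE : ∀ s, s ≤ j → c + 2 * ((s : ℝ) - i) * r ≤ ee r lam x s) :
    ∀ t, i ≤ t → t ≤ j → gg r lam x t = c + 2 * ((t : ℝ) - i) * r := by
  intro t hit htj
  apply le_antisymm
  · have := gg_le r lam x hit (s := i)
    rw [hEi] at this
    linarith
  · apply le_gg
    intro s hs
    have := hE s (le_trans hs htj)
    linarith

end S13

/-- Special uniform case (all sensors initially on the barrier): if `λ* > 0`, then there exist
an order-preserving optimal covering placement `y` and indices `i ≤ j` with sensors
`i, …, j` in attached positions (`y (t+1) = y t + 2r` for `i ≤ t < j`) such that one of: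
(a) `i = 1`, `y 1 = r`, and `y j = x j − λ*`;
(b) `j = n`, `y n = L − r`, and `y i = x i + λ*`;
(c) `i < j`, `y i = x i + λ*`, and `y j = x j − λ*`. -/
theorem stmt13 (n : ℕ) (hn : 1 ≤ n) (L r : ℝ) (hL : 0 < L) (hr : 0 < r)
    (x : ℕ → ℝ) (hsort : ∀ i j, 1 ≤ i → i ≤ j → j ≤ n → x i ≤ x j)
    (hcap : L ≤ 2 * n * r)
    (hon : ∀ i, 1 ≤ i → i ≤ n → x i ∈ Set.Icc (0 : ℝ) L)
    (hlam : 0 < LamStar n L r x) :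
    ∃ y : ℕ → ℝ, Covers n L r y ∧
      (∀ i j, 1 ≤ i → i ≤ j → j ≤ n → y i ≤ y j) ∧
      MaxMove n x y = LamStar n L r x ∧
      ∃ i j, 1 ≤ i ∧ i ≤ j ∧ j ≤ n ∧
        (∀ t, i ≤ t → t < j → y (t + 1) = y t + 2 * r) ∧
        ((i = 1 ∧ y 1 = r ∧ y j = x j - LamStar n L r x) ∨
         (j = n ∧ y n = L - r ∧ y i = x i + LamStar n L r x) ∨
         (i < j ∧ y i = x i + LamStar n L r x ∧ y j = x j - LamStar n L r x)) := by
  classical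
  set F := (Finset.Icc 1 n) ×ˢ (Finset.Icc 1 n) with hFdef
  have hFne : F.Nonempty :=
    ⟨(1, 1), by
      rw [hFdef]
      exact Finset.mem_product.mpr
        ⟨Finset.mem_Icc.mpr ⟨le_rfl, hn⟩, Finset.mem_Icc.mpr ⟨le_rfl, hn⟩⟩⟩
  set f : ℕ × ℕ → ℝ := fun p =>
    if p.1 < p.2 then (x p.2 - x p.1) / 2 - ((p.2 : ℝ) - (p.1 : ℝ)) * r
    else max (x p.1 - (2 * (p.1 : ℝ) - 1) * r)
      (L - x p.1 - (2 * ((n : ℝ) - (p.1 : ℝ)) + 1) * r) with hfdef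
  set lam := max 0 (F.sup' hFne f) with hlamdef
  have H0 : (0 : ℝ) ≤ lam := le_max_left _ _
  have Hsup : ∀ p ∈ F, f p ≤ lam := fun p hp =>
    le_trans (Finset.le_sup' f hp) (le_max_right _ _)
  have hmemF : ∀ a b : ℕ, 1 ≤ a → a ≤ n → 1 ≤ b → b ≤ n → (a, b) ∈ F := by
    intro a b h1 h2 h3 h4
    rw [hFdef]
    exact Finset.mem_product.mpr ⟨Finset.mem_Icc.mpr ⟨h1, h2⟩, Finset.mem_Icc.mpr ⟨h3, h4⟩⟩
  have HA : ∀ t, 1 ≤ t → t ≤ n → x t - (2 * (t : ℝ) - 1) * r ≤ lam := by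
    intro t h1 h2
    have h := Hsup _ (hmemF t t h1 h2 h1 h2)
    rw [hfdef] at h
    simp only [lt_self_iff_false, if_false] at h
    exact le_trans (le_max_left _ _) h
  have HB : ∀ t, 1 ≤ t → t ≤ n → L - x t - (2 * ((n : ℝ) - t) + 1) * r ≤ lam := by
    intro t h1 h2
    have h := Hsup _ (hmemF t t h1 h2 h1 h2)
    rw [hfdef] at h
    simp only [lt_self_iff_false, if_false] at h
    exact le_trans (le_max_right _ _) h
  have HC : ∀ s t, 1 ≤ s → s < t → t ≤ n →
      (x t - x s) / 2 - ((t : ℝ) - s) * r ≤ lam := by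
    intro s t h1 hst h2
    have h := Hsup _ (hmemF s t h1 (by omega) (by omega) h2)
    rw [hfdef] at h
    simpa only [hst, if_true] using h
  set g := S13.gg r lam x with hgdef
  have hub : ∀ i, 1 ≤ i → i ≤ n → g i ≤ x i + lam := fun i h1 _ => S13.gg_ub h1
  have hlb : ∀ i, 1 ≤ i → i ≤ n → x i - lam ≤ g i := fun i h1 h2 =>
    S13.gg_lb H0 HA HC h1 h2
  have hgcov : Covers n L r g :=
    S13.covers_of_chain hn (S13.gg_first hr) (fun t _ _ => S13.gg_chain t)
      (S13.gg_last hn hcap HB)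
  have hmono : ∀ i j, 1 ≤ i → i ≤ j → j ≤ n → g i ≤ g j := fun i j h1 h2 h3 =>
    S13.gg_mono hsort hr h1 h2 h3
  have hgmax : MaxMove n x g ≤ lam :=
    S13.maxmove_le hn x g (fun i h1 h2 =>
      abs_le.mpr ⟨by linarith [hub i h1 h2], by linarith [hlb i h1 h2]⟩)
  have hbdd : BddBelow (MaxMove n x '' {y : ℕ → ℝ | Covers n L r y}) :=
    ⟨0, by rintro mv ⟨y, hy, rfl⟩; exact S13.maxmove_nonneg hn x y⟩
  have hLup : LamStar n L r x ≤ MaxMove n x g := csInf_le hbdd ⟨g, hgcov, rfl⟩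
  have hLlo : lam ≤ LamStar n L r x := by
    have hne : (MaxMove n x '' {y : ℕ → ℝ | Covers n L r y}).Nonempty :=
      ⟨MaxMove n x g, ⟨g, hgcov, rfl⟩⟩
    apply le_csInf hne
    rintro mv ⟨y, hy, rfl⟩
    have hyc : Covers n L r y := hy
    apply max_le (S13.maxmove_nonneg hn x y)
    apply Finset.sup'_le
    rintro ⟨a, b⟩ hab
    obtain ⟨haI, hbI⟩ := Finset.mem_product.mp hab
    rw [Finset.mem_Icc] at haI hbI
    by_cases h : a < b
    · have := S13.lb_C hn hr hsort hon hyc haI.1 h hbI.2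
      rw [hfdef]
      simpa only [h, if_true] using this
    · rw [hfdef]
      simp only [h, if_false]
      exact max_le (S13.lb_A hn hr hsort hon hyc haI.1 haI.2)
        (S13.lb_B hn hr hsort hon hyc haI.1 haI.2)
  have heq : LamStar n L r x = lam := le_antisymm (le_trans hLup hgmax) hLlo
  have hgopt : MaxMove n x g = LamStar n L r x :=
    le_antisymm (by rw [heq]; exact hgmax) hLup
  have hlampos : 0 < lam := heq ▸ hlam
  have hsup_eq : lam = F.sup' hFne f := by
    rcases le_or_gt (F.sup' hFne f) 0 with h | h
    · have : lam = 0 := by rw [hlamdef, max_eq_left h]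
      linarith
    · rw [hlamdef, max_eq_right h.le]
  obtain ⟨p, hpF, hps⟩ := Finset.exists_mem_eq_sup' hFne f
  obtain ⟨a, b⟩ := p
  obtain ⟨haI, hbI⟩ := Finset.mem_product.mp hpF
  rw [Finset.mem_Icc] at haI hbI
  refine ⟨g, hgcov, hmono, hgopt, ?_⟩
  rw [heq]
  by_cases hab : a < b
  · -- case (c)
    have hlf : lam = (x b - x a) / 2 - ((b : ℝ) - a) * r := by
      rw [hsup_eq, hps, hfdef]
      simp only [hab, if_true]
    have hAb := HA b hbI.1 hbI.2
    have hAi : x a + lam ≤ (2 * (a : ℝ) - 1) * r := by linarith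
    have hEi : S13.ee r lam x a = x a + lam := by rw [S13.ee, if_neg (by omega)]
    have hE : ∀ s, s ≤ b → (x a + lam) + 2 * ((s : ℝ) - (a : ℝ)) * r ≤ S13.ee r lam x s := by
      intro s hs
      by_cases hs0 : s = 0
      · subst hs0
        rw [S13.ee, if_pos rfl]
        push_cast
        linarith
      · rw [S13.ee, if_neg hs0]
        rcases eq_or_lt_of_le hs with he | hlt
        · subst he
          linarith
        · have := HC s b (by omega) hlt hbI.2
          linarith
    have hblock := S13.gg_block hEi hE
    refine ⟨a, b, haI.1, hab.le, hbI.2, ?_, Or.inr (Or.inr ⟨hab, ?_, ?_⟩)⟩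
    · intro t h1 h2
      have e1 := hblock t h1 (by omega)
      have e2 := hblock (t + 1) (by omega) (by omega)
      rw [hgdef, e2, e1]
      push_cast
      ring
    · rw [hgdef, hblock a le_rfl hab.le]
      ring
    · rw [hgdef, hblock b hab.le le_rfl]
      linarith
  · -- a ≥ b : f (a,b) = max (A a) (B a)
    have hlf0 : lam = max (x a - (2 * (a : ℝ) - 1) * r)
        (L - x a - (2 * ((n : ℝ) - a) + 1) * r) := by
      rw [hsup_eq, hps, hfdef]
      simp only [hab, if_false]
    rcases le_total (x a - (2 * (a : ℝ) - 1) * r)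
        (L - x a - (2 * ((n : ℝ) - a) + 1) * r) with hmx | hmx
    · -- case (b) : lam = B a
      rw [max_eq_right hmx] at hlf0
      have hAi : x a + lam ≤ (2 * (a : ℝ) - 1) * r := by linarith
      have hEi : S13.ee r lam x a = x a + lam := by rw [S13.ee, if_neg (by omega)]
      have hE : ∀ s, s ≤ n → (x a + lam) + 2 * ((s : ℝ) - (a : ℝ)) * r ≤ S13.ee r lam x s := by
        intro s hs
        by_cases hs0 : s = 0
        · subst hs0
          rw [S13.ee, if_pos rfl]
          push_cast
          linarith
        · rw [S13.ee, if_neg hs0]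
          have := HB s (by omega) hs
          linarith
      have hblock := S13.gg_block hEi hE
      refine ⟨a, n, haI.1, haI.2, le_rfl, ?_, Or.inr (Or.inl ⟨rfl, ?_, ?_⟩)⟩
      · intro t h1 h2
        have e1 := hblock t h1 (by omega)
        have e2 := hblock (t + 1) (by omega) (by omega)
        rw [hgdef, e2, e1]
        push_cast
        ring
      · rw [hgdef, hblock n haI.2 le_rfl]
        linarith
      · rw [hgdef, hblock a le_rfl haI.2]
        ring
    · -- case (a) : lam = A a
      rw [max_eq_left hmx] at hlf0
      have hEi : S13.ee r lam x 0 = -r := by rw [S13.ee, if_pos rfl]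
      have hE : ∀ s, s ≤ a → (-r) + 2 * ((s : ℝ) - ((0 : ℕ) : ℝ)) * r ≤ S13.ee r lam x s := by
        intro s hs
        by_cases hs0 : s = 0
        · subst hs0
          rw [S13.ee, if_pos rfl]
          push_cast
          linarith
        · rw [S13.ee, if_neg hs0]
          rcases eq_or_lt_of_le hs with he | hlt
          · subst he
            push_cast
            linarith
          · have := HC s a (by omega) hlt haI.2
            push_cast
            linarith
      have hblock := S13.gg_block hEi hE
      refine ⟨1, a, le_rfl, haI.1, haI.2, ?_, Or.inl ⟨rfl, ?_, ?_⟩⟩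
      · intro t h1 h2
        have e1 := hblock t (by omega) (by omega)
        have e2 := hblock (t + 1) (by omega) (by omega)
        rw [hgdef, e2, e1]
        push_cast
        ring
      · rw [hgdef, hblock 1 (by omega) haI.1]
        push_cast
        ring
      · rw [hgdef, hblock a (by omega) le_rfl]
        push_cast
        linarith
end

section
/- In the simple cycle barrier coverage problem, if λ* > 0, then λ* equals the maximum of the set Λ = { (x_j − x_i − 2r(j−i))/2 : 1 ≤ i ≤ n and i < j < i + n }, where the extended coordinates satisfy x_{k+n} = x_k + L for 1 ≤ k ≤ n. -/
/-- Cycle case: the placement `y` of sensors `1, …, n` (points of the cycle `ℝ/Lℤ`),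
all with range `r`, covers the whole cycle. -/
def CycCovers (n : ℕ) (L r : ℝ) (y : ℕ → AddCircle L) : Prop :=
  ∀ p : AddCircle L, ∃ i, 1 ≤ i ∧ i ≤ n ∧ dist p (y i) ≤ r

/-- The maximum movement of the placement `y`: the largest cycle-distance between a
sensor's initial point (represented by the real coordinate `x i`) and its placed point. -/
noncomputable def CycMaxMove (n : ℕ) (L : ℝ) (x : ℕ → ℝ) (y : ℕ → AddCircle L) : ℝ :=
  sSup ((fun i => dist ((x i : AddCircle L)) (y i)) '' Set.Icc 1 n)

/-- `λ*` for the cycle: the infimum of the maximum movement over all covering placements. -/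
noncomputable def CycLamStar (n : ℕ) (L r : ℝ) (x : ℕ → ℝ) : ℝ :=
  sInf (CycMaxMove n L x '' {y : ℕ → AddCircle L | CycCovers n L r y})

/-!
Lower bound: suppose a covering placement moves every sensor by at most `m`, and `m < v`
for some `v ∈ Λ` realised by `i < j`. Then `j - i` points spaced slightly more than `2r` apart
in `(x_i + m + r, x_j - m - r)` need `j - i` distinct sensors, and the initial position of each
of them has a copy strictly between `x_i` and `x_j`: only `j - i - 1` sensors qualify.

Upper bound: with `μ = max (max Λ) 0` and `p_k = min_{1 ≤ i ≤ k} (x_i + μ + 2r(k - i))`,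
place sensor `k` at `p_{k+n}`. Every sensor then moves by at most `μ`, consecutive sensors are
at most `2r` apart, and so are sensors `n` and `1` across the wrap-around because `L ≤ 2nr`.
Hence `max Λ ≤ λ* ≤ max (max Λ) 0`, and `λ* > 0` settles the case `max Λ ≤ 0`.
-/

namespace AddCircle

variable {L : ℝ}

theorem dist_coe_le_abs_sub (u v : ℝ) : dist (u : AddCircle L) v ≤ |u - v| := by
  rw [dist_eq_norm, ← coe_sub]
  exact QuotientAddGroup.norm_mk_le_norm

theorem exists_abs_sub_le_of_dist_coe_le {u v ρ : ℝ} (h : dist (u : AddCircle L) v ≤ ρ) :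
    ∃ t : ℤ, |u - (v + t * L)| ≤ ρ := by
  have hu : u ∈ ((↑) : ℝ → AddCircle L) ⁻¹' Metric.closedBall (v : AddCircle L) ρ := h
  rw [coe_real_preimage_closedBall_eq_iUnion, Set.mem_iUnion] at hu
  obtain ⟨t, ht⟩ := hu
  exact ⟨t, by simpa [Real.dist_eq] using ht⟩

theorem lt_dist_coe_of_lt_abs_sub {u v ρ : ℝ} (h₁ : ρ < |u - v|) (h₂ : |u - v| < L - ρ) :
    ρ < dist (u : AddCircle L) v := by
  by_contra! h
  obtain ⟨t, ht⟩ := exists_abs_sub_le_of_dist_coe_le h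
  rcases lt_trichotomy t 0 with ht0 | rfl | ht0
  · have : (t : ℝ) ≤ -1 := by exact_mod_cast Int.le_sub_one_of_lt ht0
    have := abs_lt.1 h₂
    have := abs_le.1 ht
    nlinarith
  · simp at ht; linarith
  · have : (1 : ℝ) ≤ t := by exact_mod_cast ht0
    have := abs_lt.1 h₂
    have := abs_le.1 ht
    nlinarith

theorem lt_dist_coe_add_mul {ρ a d : ℝ} (hρ : 0 ≤ ρ) {N : ℕ} (hd : ρ < d)
    (hspan : ((N : ℝ) - 1) * d < L - ρ) {s s' : ℕ} (hs : s < N) (hs' : s' < N) (hne : s ≠ s') :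
    ρ < dist ((a + s * d : ℝ) : AddCircle L) ((a + s' * d : ℝ) : AddCircle L) := by
  wlog hss' : s < s' generalizing s s'
  · rw [dist_comm]
    exact this hs' hs hne.symm (by omega)
  have h₁ : (1 : ℝ) ≤ s' - s := by
    rw [le_sub_iff_add_le']; exact_mod_cast hss'
  have h₂ : (s' : ℝ) - s ≤ N - 1 := by
    rw [sub_le_sub_iff]; exact_mod_cast (by omega : s' + 1 ≤ N + s)
  have habs : |a + s * d - (a + s' * d)| = (s' - s) * d := by
    rw [abs_sub_comm, abs_of_nonneg (by nlinarith)]; ring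
  apply lt_dist_coe_of_lt_abs_sub <;> rw [habs] <;> nlinarith

theorem coe_toIcoMod (hL : 0 < L) (a w : ℝ) : ((toIcoMod hL a w : ℝ) : AddCircle L) = w := by
  rw [toIcoMod, coe_sub, coe_zsmul, coe_period, smul_zero, sub_zero]

end AddCircle

theorem exists_abs_sub_le_of_chain {r : ℝ} {P : ℕ → ℝ} {a b : ℕ} (hab : a ≤ b)
    (hgap : ∀ k, a ≤ k → k < b → P (k + 1) ≤ P k + 2 * r) {w : ℝ}
    (hw : w ∈ Set.Icc (P a - r) (P b + r)) : ∃ k, a ≤ k ∧ k ≤ b ∧ |w - P k| ≤ r := by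
  induction b, hab using Nat.le_induction with
  | base => exact ⟨a, le_rfl, le_rfl, abs_sub_le_iff.2 ⟨by linarith [hw.2], by linarith [hw.1]⟩⟩
  | succ b hab ih =>
    by_cases hwb : w ≤ P b + r
    · obtain ⟨k, hak, hkb, hk⟩ := ih (fun k h₁ h₂ => hgap k h₁ (by omega)) ⟨hw.1, hwb⟩
      exact ⟨k, hak, by omega, hk⟩
    · have := hgap b hab (by omega)
      exact ⟨b + 1, by omega, le_rfl, abs_sub_le_iff.2 ⟨by linarith [hw.2], by linarith⟩⟩

theorem AddCircle.exists_dist_le_of_chain {L r : ℝ} (hL : 0 < L) {P : ℕ → ℝ} {a b : ℕ}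
    (hab : a ≤ b) (hgap : ∀ k, a ≤ k → k < b → P (k + 1) ≤ P k + 2 * r)
    (hwrap : P a + L ≤ P b + 2 * r) (q : AddCircle L) :
    ∃ k, a ≤ k ∧ k ≤ b ∧ dist q (P k) ≤ r := by
  induction q using QuotientAddGroup.induction_on with
  | H w =>
  have hw := toIcoMod_mem_Ico hL (P a - r) w
  obtain ⟨k, hak, hkb, hk⟩ := exists_abs_sub_le_of_chain hab hgap
    (w := toIcoMod hL (P a - r) w) ⟨hw.1, by linarith [hw.2]⟩
  refine ⟨k, hak, hkb, ?_⟩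
  rw [← AddCircle.coe_toIcoMod hL (P a - r) w]
  exact (AddCircle.dist_coe_le_abs_sub _ _).trans hk

section MaxMove

variable {n : ℕ} {L r : ℝ} {x : ℕ → ℝ}

theorem cycMaxMove_congr {x' : ℕ → ℝ} (h : ∀ k, 1 ≤ k → k ≤ n → x k = x' k) :
    CycMaxMove n L x = CycMaxMove n L x' := by
  funext y
  unfold CycMaxMove
  congr 1
  exact Set.image_congr fun k hk => by rw [h k hk.1 hk.2]

theorem cycLamStar_congr {x' : ℕ → ℝ} (h : ∀ k, 1 ≤ k → k ≤ n → x k = x' k) :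
    CycLamStar n L r x = CycLamStar n L r x' := by
  rw [CycLamStar, CycLamStar, cycMaxMove_congr h]

theorem dist_le_cycMaxMove (y : ℕ → AddCircle L) {k : ℕ} (hk₁ : 1 ≤ k) (hkn : k ≤ n) :
    dist (x k : AddCircle L) (y k) ≤ CycMaxMove n L x y :=
  le_csSup ((Set.finite_Icc 1 n).image _).bddAbove ⟨k, ⟨hk₁, hkn⟩, rfl⟩

theorem cycMaxMove_nonneg (y : ℕ → AddCircle L) : 0 ≤ CycMaxMove n L x y :=
  Real.sSup_nonneg <| by rintro _ ⟨k, -, rfl⟩; exact dist_nonneg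

theorem cycMaxMove_le {y : ℕ → AddCircle L} {M : ℝ} (hM : 0 ≤ M)
    (h : ∀ k, 1 ≤ k → k ≤ n → dist (x k : AddCircle L) (y k) ≤ M) : CycMaxMove n L x y ≤ M :=
  Real.sSup_le (by rintro _ ⟨k, hk, rfl⟩; exact h k hk.1 hk.2) hM

theorem cycLamStar_le {y : ℕ → AddCircle L} (hy : CycCovers n L r y) :
    CycLamStar n L r x ≤ CycMaxMove n L x y :=
  csInf_le ⟨0, by rintro _ ⟨y, -, rfl⟩; exact cycMaxMove_nonneg y⟩ ⟨y, hy, rfl⟩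

theorem le_cycLamStar {v : ℝ} (hne : ∃ y, CycCovers n L r y)
    (h : ∀ y, CycCovers n L r y → v ≤ CycMaxMove n L x y) : v ≤ CycLamStar n L r x := by
  obtain ⟨y, hy⟩ := hne
  exact le_csInf ⟨_, y, hy, rfl⟩ (by rintro _ ⟨y, hy, rfl⟩; exact h y hy)

end MaxMove

def cycLambda (n : ℕ) (r : ℝ) (xe : ℕ → ℝ) : Set ℝ :=
  {v | ∃ i j, 1 ≤ i ∧ i ≤ n ∧ i < j ∧ j < i + n ∧
    v = (xe j - xe i - 2 * r * ((j : ℝ) - (i : ℝ))) / 2}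

section Extended

variable {n : ℕ} {L r : ℝ} {xe : ℕ → ℝ}

theorem cycLambda_finite : (cycLambda n r xe).Finite := by
  refine (((Set.finite_Icc 1 n).prod (Set.finite_Icc 1 (2 * n))).image
    fun p : ℕ × ℕ => (xe p.2 - xe p.1 - 2 * r * ((p.2 : ℝ) - (p.1 : ℝ))) / 2).subset ?_
  rintro _ ⟨i, j, hi₁, hin, hij, hji, rfl⟩
  exact ⟨(i, j), ⟨⟨hi₁, hin⟩, ⟨by omega, by omega⟩⟩, rfl⟩

theorem cycLambda_nonempty (hn : 2 ≤ n) : (cycLambda n r xe).Nonempty :=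
  ⟨_, 1, 2, le_rfl, by omega, by omega, by omega, rfl⟩

theorem monotoneOn_Icc_of_periodic (hsort : ∀ i j, 1 ≤ i → i ≤ j → j ≤ n → xe i ≤ xe j)
    (hpos : 0 < xe 1) (hlt : xe n < L)
    (hper : ∀ k, 1 ≤ k → k ≤ n → xe (k + n) = xe k + L) :
    MonotoneOn xe (Set.Icc 1 (2 * n)) := by
  have hlow : ∀ k, 1 ≤ k → k ≤ n → 0 < xe k := fun k h₁ h₂ =>
    hpos.trans_le (hsort 1 k le_rfl h₁ h₂)
  have hhigh : ∀ k, 1 ≤ k → k ≤ n → xe k < L := fun k h₁ h₂ =>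
    (hsort k n h₁ h₂ le_rfl).trans_lt hlt
  rintro a ⟨ha₁, ha₂⟩ b ⟨hb₁, hb₂⟩ hab
  rcases le_or_gt b n with hbn | hbn
  · exact hsort a b ha₁ hab hbn
  obtain ⟨b, rfl⟩ : ∃ b', b = b' + n := ⟨b - n, by omega⟩
  rw [hper b (by omega) (by omega)]
  rcases le_or_gt a n with han | han
  · linarith [hhigh a ha₁ han, hlow b (by omega) (by omega)]
  obtain ⟨a, rfl⟩ : ∃ a', a = a' + n := ⟨a - n, by omega⟩
  rw [hper a (by omega) (by omega)]
  linarith [hsort a b (by omega) (by omega) (by omega)]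

theorem sub_le_of_forall_mem_cycLambda_le (hcap : L ≤ 2 * n * r)
    (hper : ∀ k, 1 ≤ k → k ≤ n → xe (k + n) = xe k + L) {M : ℝ} (hM₀ : 0 ≤ M)
    (hM : ∀ v ∈ cycLambda n r xe, v ≤ M) {i k : ℕ} (hi : 1 ≤ i) (hik : i ≤ k)
    (hk : k ≤ 2 * n) : xe k - xe i - 2 * r * ((k : ℝ) - i) ≤ 2 * M := by
  have hΛ : ∀ i j, 1 ≤ i → i ≤ n → i < j → j < i + n →
      xe j - xe i - 2 * r * ((j : ℝ) - i) ≤ 2 * M := fun i j h₁ h₂ h₃ h₄ => by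
    linarith [hM _ ⟨i, j, h₁, h₂, h₃, h₄, rfl⟩]
  have hfirst : ∀ i k, 1 ≤ i → i ≤ n → i ≤ k → k ≤ 2 * n →
      xe k - xe i - 2 * r * ((k : ℝ) - i) ≤ 2 * M := by
    intro i k hi hin hik hk
    rcases hik.eq_or_lt with rfl | hik
    · simpa using hM₀
    rcases lt_or_ge k (i + n) with hki | hki
    · exact hΛ i k hi hin hik hki
    -- a pair at least `n` apart is dominated by `(i, k - n)`, as `L - 2nr ≤ 0`
    obtain ⟨k, rfl⟩ : ∃ k', k = k' + n := ⟨k - n, by omega⟩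
    rw [hper k (by omega) (by omega)]
    push_cast
    rcases hki.eq_or_lt with hki | hki
    · rw [show k = i by omega]; nlinarith
    · nlinarith [hΛ i k hi hin (by omega) (by omega)]
  rcases le_or_gt i n with hin | hin
  · exact hfirst i k hi hin hik hk
  obtain ⟨i, rfl⟩ : ∃ i', i = i' + n := ⟨i - n, by omega⟩
  obtain ⟨k, rfl⟩ : ∃ k', k = k' + n := ⟨k - n, by omega⟩
  rw [hper i (by omega) (by omega), hper k (by omega) (by omega)]
  push_cast
  linarith [hfirst i k (by omega) (by omega) (by omega) (by omega)]

theorem exists_cyclic_chain (hn : 1 ≤ n) (hcap : L ≤ 2 * n * r)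
    (hper : ∀ k, 1 ≤ k → k ≤ n → xe (k + n) = xe k + L) {M : ℝ}
    (hM : ∀ i k, 1 ≤ i → i ≤ k → k ≤ 2 * n → xe k - xe i - 2 * r * ((k : ℝ) - i) ≤ 2 * M) :
    ∃ P : ℕ → ℝ, (∀ k, 1 ≤ k → k ≤ 2 * n → |P k - xe k| ≤ M) ∧
      (∀ k, 1 ≤ k → P (k + 1) ≤ P k + 2 * r) ∧ P (n + 1) + L ≤ P (2 * n) + 2 * r := by
  -- `P k = min_{1 ≤ i ≤ k} (xe i + M + 2r(k - i))`, attained at `i = ι k`.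
  set g : ℕ → ℝ := fun i => xe i - 2 * r * i with hg
  choose! ι hι hmin using fun k (hk : 1 ≤ k) =>
    (Finset.Icc 1 k).exists_min_image g (Finset.nonempty_Icc.2 hk)
  simp only [Finset.mem_Icc] at hι hmin
  refine ⟨fun k => g (ι k) + M + 2 * r * k, fun k hk₁ hk₂ => ?_, fun k hk => ?_, ?_⟩
  · have := hmin k hk₁ k ⟨hk₁, le_rfl⟩
    have := hM (ι k) k (hι k hk₁).1 (hι k hk₁).2 hk₂
    rw [abs_le]
    constructor <;> linarith
  · have := hmin (k + 1) (by omega) (ι k) ⟨(hι k hk).1, (hι k hk).2.trans k.le_succ⟩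
    dsimp only
    push_cast
    linarith
  · obtain ⟨hi₁, hi₂⟩ := hι (2 * n) (by omega)
    set i := ι (2 * n)
    dsimp only
    push_cast
    rcases le_or_gt i n with hin | hin
    · have := hmin (n + 1) (by omega) i ⟨hi₁, by omega⟩
      nlinarith
    · obtain ⟨i', hi'⟩ : ∃ i', i = i' + n := ⟨i - n, by omega⟩
      have := hmin (n + 1) (by omega) i' ⟨by omega, by omega⟩
      have hgi : g i = g i' + L - 2 * r * n := by
        simp only [hg, hi', hper i' (by omega) (by omega)]; push_cast; ring
      linarith

theorem exists_covers_cycMaxMove_le (hn : 1 ≤ n) (hL : 0 < L) (hcap : L ≤ 2 * n * r)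
    (hper : ∀ k, 1 ≤ k → k ≤ n → xe (k + n) = xe k + L) {M : ℝ} (hM₀ : 0 ≤ M)
    (hM : ∀ v ∈ cycLambda n r xe, v ≤ M) :
    ∃ y : ℕ → AddCircle L, CycCovers n L r y ∧ CycMaxMove n L xe y ≤ M := by
  obtain ⟨P, hmove, hgap, hwrap⟩ := exists_cyclic_chain hn hcap hper
    fun i k hi hik hk => sub_le_of_forall_mem_cycLambda_le hcap hper hM₀ hM hi hik hk
  refine ⟨fun k => (P (k + n) : AddCircle L), fun q => ?_, cycMaxMove_le hM₀ fun k hk₁ hkn => ?_⟩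
  · obtain ⟨k, hk₁, hk₂, hk⟩ := AddCircle.exists_dist_le_of_chain hL (by omega)
      (fun k hk _ => hgap k (by omega)) hwrap q
    refine ⟨k - n, by omega, by omega, ?_⟩
    dsimp only
    rwa [Nat.sub_add_cancel (by omega)]
  · rw [← AddCircle.coe_add_period, ← hper k hk₁ hkn, dist_comm]
    exact (AddCircle.dist_coe_le_abs_sub _ _).trans (hmove (k + n) (by omega) (by omega))

theorem exists_copy_between (hmono : MonotoneOn xe (Set.Icc 1 (2 * n)))
    (hpos : 0 < xe 1) (hlt : xe n < L) (hper : ∀ k, 1 ≤ k → k ≤ n → xe (k + n) = xe k + L)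
    {k : ℕ} (hk₁ : 1 ≤ k) (hkn : k ≤ n) {i j : ℕ} (hi : 1 ≤ i) (hij : i < j) (hj : j ≤ 2 * n)
    {t : ℤ} (hlo : xe i < xe k + t * L) (hhi : xe k + t * L < xe j) :
    ∃ k', i < k' ∧ k' < j ∧ (k' = k ∨ k' = k + n) := by
  have hmem : ∀ a, 1 ≤ a → a ≤ 2 * n → a ∈ Set.Icc 1 (2 * n) := fun a h₁ h₂ => ⟨h₁, h₂⟩
  have hle : ∀ a b, 1 ≤ a → a ≤ b → b ≤ 2 * n → xe a ≤ xe b := fun a b h₁ h₂ h₃ =>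
    hmono (hmem a h₁ (by omega)) (hmem b (by omega) h₃) h₂
  have hxk₀ : 0 < xe k := hpos.trans_le (hle 1 k le_rfl hk₁ (by omega))
  have hxkL : xe k < L := (hle k n hk₁ hkn (by omega)).trans_lt hlt
  have hxi₀ : 0 < xe i := hpos.trans_le (hle 1 i le_rfl hi (by omega))
  have hxj : xe j < 2 * L := by
    linarith [hle j (n + n) (by omega) (by omega) (by omega), hper n (by omega) le_rfl]
  have ht₀ : (-1 : ℝ) < t := by
    by_contra! h
    nlinarith
  have ht₁ : (t : ℝ) < 2 := by
    by_contra! h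
    nlinarith
  obtain ⟨k', hk', hxk'⟩ : ∃ k', (k' = k ∨ k' = k + n) ∧ xe k' = xe k + t * L := by
    have h₀ : -1 < t := by exact_mod_cast ht₀
    have h₁ : t < 2 := by exact_mod_cast ht₁
    rcases (by omega : t = 0 ∨ t = 1) with rfl | rfl
    · exact ⟨k, Or.inl rfl, by simp⟩
    · exact ⟨k + n, Or.inr rfl, by simp [hper k hk₁ hkn]⟩
  have hk'mem : k' ∈ Set.Icc 1 (2 * n) := hmem k' (by omega) (by omega)
  exact ⟨k', hmono.reflect_lt (hmem i hi (by omega)) hk'mem (hxk' ▸ hlo),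
    hmono.reflect_lt hk'mem (hmem j (by omega) hj) (hxk' ▸ hhi), hk'⟩

theorem exists_copy_of_covers
    (hmono : MonotoneOn xe (Set.Icc 1 (2 * n))) (hpos : 0 < xe 1) (hlt : xe n < L)
    (hper : ∀ k, 1 ≤ k → k ≤ n → xe (k + n) = xe k + L) {y : ℕ → AddCircle L}
    (hy : CycCovers n L r y) {i j : ℕ} (hi : 1 ≤ i) (hij : i < j) (hj : j ≤ 2 * n) {w : ℝ}
    (hlo : xe i + CycMaxMove n L xe y + r < w) (hhi : w + CycMaxMove n L xe y + r < xe j) :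
    ∃ k', i < k' ∧ k' < j ∧ ∃ k, 1 ≤ k ∧ k ≤ n ∧ (k' = k ∨ k' = k + n) ∧
      dist (w : AddCircle L) (y k) ≤ r := by
  obtain ⟨k, hk₁, hkn, hk⟩ := hy w
  have hmove : dist (w : AddCircle L) (xe k) ≤ CycMaxMove n L xe y + r := by
    linarith [dist_triangle_right (w : AddCircle L) (xe k) (y k),
      dist_le_cycMaxMove (x := xe) y hk₁ hkn]
  obtain ⟨t, ht⟩ := AddCircle.exists_abs_sub_le_of_dist_coe_le hmove
  obtain ⟨k', hik', hk'j, hk'⟩ := exists_copy_between hmono hpos hlt hper hk₁ hkn hi hij hj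
    (t := t) (by linarith [(abs_le.1 ht).2]) (by linarith [(abs_le.1 ht).1])
  exact ⟨k', hik', hk'j, k, hk₁, hkn, hk', hk⟩

theorem le_cycMaxMove_of_covers (hr : 0 ≤ r)
    (hmono : MonotoneOn xe (Set.Icc 1 (2 * n))) (hpos : 0 < xe 1) (hlt : xe n < L)
    (hper : ∀ k, 1 ≤ k → k ≤ n → xe (k + n) = xe k + L) {y : ℕ → AddCircle L}
    (hy : CycCovers n L r y) {v : ℝ} (hv : v ∈ cycLambda n r xe) : v ≤ CycMaxMove n L xe y := by
  obtain ⟨i, j, hi₁, hin, hij, hji, rfl⟩ := hv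
  obtain ⟨N, rfl⟩ : ∃ N, j = i + N := ⟨j - i, by omega⟩
  set m := CycMaxMove n L xe y
  push_cast
  set v := (xe (i + N) - xe i - 2 * r * ((i : ℝ) + N - i)) / 2 with hv
  by_contra! hmv
  have hN : (0 : ℝ) < N := by exact_mod_cast (by omega : 0 < N)
  have hm₀ : 0 ≤ m := cycMaxMove_nonneg y
  have hxj : xe (i + N) = xe i + 2 * v + 2 * r * N := by rw [hv]; ring
  have hxjL : xe (i + N) ≤ xe i + L := by
    rw [← hper i hi₁ hin]
    exact hmono ⟨by omega, by omega⟩ ⟨by omega, by omega⟩ (by omega)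
  -- The `N` points `q s` are more than `2r` apart, so they are covered by `N` distinct sensors,
  -- and each of these has a copy among the `N - 1` indices strictly between `i` and `i + N`.
  set δ := (v - m) / N
  have hδ : 0 < δ := div_pos (by linarith) hN
  have hNδ : N * δ = v - m := mul_div_cancel₀ _ hN.ne'
  set q : ℕ → ℝ := fun s => (xe i + m + r + δ) + s * (2 * r + δ)
  have hcopy : ∀ s, s < N → ∃ k', i < k' ∧ k' < i + N ∧ ∃ k, 1 ≤ k ∧ k ≤ n ∧
      (k' = k ∨ k' = k + n) ∧ dist (q s : AddCircle L) (y k) ≤ r := by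
    intro s hs
    have hs' : (s : ℝ) ≤ N - 1 := by
      rw [le_sub_iff_add_le]; exact_mod_cast hs
    exact exists_copy_of_covers hmono hpos hlt hper hy hi₁ (by omega) (by omega)
      (by nlinarith [(Nat.cast_nonneg s : (0 : ℝ) ≤ s)]) (by nlinarith)
  choose! c hic hcj κ hκ₁ hκn hcκ hκ using hcopy
  obtain ⟨s, hs, s', hs', hne, hcs⟩ := Finset.exists_ne_map_eq_of_card_lt_of_maps_to
    (t := Finset.Ioo i (i + N)) (by simp only [Nat.card_Ioo, Finset.card_range]; omega)
    (f := c) fun s hs => Finset.mem_Ioo.2 ⟨hic s (Finset.mem_range.1 hs),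
      hcj s (Finset.mem_range.1 hs)⟩
  rw [Finset.mem_range] at hs hs'
  have hκs : κ s = κ s' := by
    have := hcκ s hs; have := hcκ s' hs'
    have := hκ₁ s hs; have := hκn s hs; have := hκ₁ s' hs'; have := hκn s' hs'
    omega
  have hclose : dist (q s : AddCircle L) (q s') ≤ 2 * r := by
    linarith [dist_triangle_right (q s : AddCircle L) (q s') (y (κ s)), hκ s hs, hκs ▸ hκ s' hs']
  have hfar : 2 * r < dist (q s : AddCircle L) (q s') :=
    AddCircle.lt_dist_coe_add_mul (by positivity) (by linarith) (by nlinarith) hs hs' hne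
  linarith

end Extended

/-- Simple cycle barrier coverage: if `λ* > 0`, then `λ*` equals the maximum of the set
`Λ = {(x j − x i − 2r(j−i))/2 : 1 ≤ i ≤ n, i < j < i + n}`, where the extended
coordinates satisfy `x (k+n) = x k + L` for `1 ≤ k ≤ n`. -/
theorem stmt15 (n : ℕ) (hn : 1 ≤ n) (L r : ℝ) (hr : 0 < r) (h2r : 2 * r < L)
    (hcap : L ≤ 2 * n * r)
    (x : ℕ → ℝ) (hx0 : 0 < x 1) (hxL : x n < L)
    (hsort : ∀ i j, 1 ≤ i → i ≤ j → j ≤ n → x i ≤ x j)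
    (xe : ℕ → ℝ)
    (hxe : ∀ k, 1 ≤ k → k ≤ n → xe k = x k)
    (hxe' : ∀ k, 1 ≤ k → k ≤ n → xe (k + n) = x k + L)
    (hlam : 0 < CycLamStar n L r x) :
    IsGreatest {v : ℝ | ∃ i j, 1 ≤ i ∧ i ≤ n ∧ i < j ∧ j < i + n ∧
        v = (xe j - xe i - 2 * r * ((j : ℝ) - (i : ℝ))) / 2}
      (CycLamStar n L r x) := by
  have hL : 0 < L := by linarith
  have hn₂ : 2 ≤ n := by
    by_contra! h
    have : (n : ℝ) ≤ 1 := by exact_mod_cast (by omega : n ≤ 1)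
    nlinarith
  have hper : ∀ k, 1 ≤ k → k ≤ n → xe (k + n) = xe k + L := fun k h₁ h₂ => by
    rw [hxe' k h₁ h₂, hxe k h₁ h₂]
  have hpos : 0 < xe 1 := hxe 1 le_rfl hn ▸ hx0
  have hlt : xe n < L := hxe n hn le_rfl ▸ hxL
  have hsort' : ∀ i j, 1 ≤ i → i ≤ j → j ≤ n → xe i ≤ xe j := fun i j h₁ h₂ h₃ => by
    rw [hxe i h₁ (h₂.trans h₃), hxe j (h₁.trans h₂) h₃]
    exact hsort i j h₁ h₂ h₃
  have hmono := monotoneOn_Icc_of_periodic hsort' hpos hlt hper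
  rw [cycLamStar_congr fun k h₁ h₂ => (hxe k h₁ h₂).symm] at hlam ⊢
  change IsGreatest (cycLambda n r xe) _
  obtain ⟨M, hMΛ, hM⟩ := Set.exists_max_image _ id cycLambda_finite (cycLambda_nonempty hn₂)
  obtain ⟨y, hy, hyM⟩ := exists_covers_cycMaxMove_le hn hL hcap hper (le_max_right M 0)
    fun v hv => (hM v hv).trans (le_max_left M 0)
  have hle : ∀ v ∈ cycLambda n r xe, v ≤ CycLamStar n L r xe := fun v hv =>
    le_cycLamStar ⟨y, hy⟩ fun y hy => le_cycMaxMove_of_covers hr.le hmono hpos hlt hper hy hv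
  have hge : CycLamStar n L r xe ≤ max M 0 := (cycLamStar_le hy).trans hyM
  have hMpos : 0 < M := by
    by_contra! h
    linarith [max_eq_right h ▸ hge]
  rw [max_eq_left hMpos.le] at hge
  refine ⟨?_, hle⟩
  rwa [le_antisymm hge (hle M hMΛ)]
end
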